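/- arXiv:1005.0998 — 6 statements merged into one kernel-verified Lean document; each statement's English description precedes it below -/
import Mathlib

section
/- Let x, x', y, y' ∈ D(φ¹)∩D(φ²), h > 0, and suppose x̂ := J_h¹ x satisfies the discrete EVI for φ¹ at x, and x' := J_h² x̂ satisfies the discrete EVI for φ² at x̂. Then for every w ∈ D(φ¹)∩D(φ²): (1/(2h))(d²(x',w) − d²(x,w)) ≤ φ¹(w)+φ²(w) − φ¹(x') − φ²(x') − (1/(4h))d²(x',x) + [φ¹(x') − φ¹(x̂)]⁺. -/
/-- Discrete Evolution Variational Inequality for the composite step `J_h² J_h¹`. -/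
theorem stmt3 {X : Type*} [MetricSpace X] (φ1 φ2 : X → ℝ) (D1 D2 : Set X)
    (h : ℝ) (hh : 0 < h) (x xhat x' w : X)
    (hx : x ∈ D1 ∩ D2) (hxhat : xhat ∈ D1) (hx' : x' ∈ D1 ∩ D2) (hw : w ∈ D1 ∩ D2)
    (hEVI1 : ∀ z ∈ D1, (1 / (2 * h)) * (dist xhat z ^ 2 - dist x z ^ 2)
      + (1 / (2 * h)) * dist xhat x ^ 2 + φ1 xhat ≤ φ1 z)
    (hEVI2 : ∀ z ∈ D2, (1 / (2 * h)) * (dist x' z ^ 2 - dist xhat z ^ 2)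
      + (1 / (2 * h)) * dist x' xhat ^ 2 + φ2 x' ≤ φ2 z) :
    (1 / (2 * h)) * (dist x' w ^ 2 - dist x w ^ 2)
      ≤ φ1 w + φ2 w - φ1 x' - φ2 x' - (1 / (4 * h)) * dist x' x ^ 2
        + max (φ1 x' - φ1 xhat) 0 := by
  have h1 := hEVI1 w hw.1
  have h2 := hEVI2 w hw.2
  have tri := dist_triangle x' xhat x
  have hm : φ1 x' - φ1 xhat ≤ max (φ1 x' - φ1 xhat) 0 := le_max_left _ 0
  have hsq : dist x' x ^ 2 ≤ 2 * dist x' xhat ^ 2 + 2 * dist xhat x ^ 2 := by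
    nlinarith [sq_nonneg (dist x' xhat - dist xhat x), dist_nonneg (x := x') (y := x),
      dist_nonneg (x := x') (y := xhat), dist_nonneg (x := xhat) (y := x)]
  have hpos : 0 < 1 / (2 * h) := by positivity
  have hkey : (1 / (4 * h)) * dist x' x ^ 2
      ≤ (1 / (2 * h)) * dist x' xhat ^ 2 + (1 / (2 * h)) * dist xhat x ^ 2 := by
    have e : 1/(4*h)*(2*dist x' xhat ^ 2 + 2*dist xhat x ^ 2)
        = 1/(2*h)*dist x' xhat ^ 2 + 1/(2*h)*dist xhat x ^ 2 := by field_simp; ring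
    have := mul_le_mul_of_nonneg_left hsq (le_of_lt (show (0:ℝ) < 1/(4*h) by positivity))
    linarith
  linarith
end

section
/- Under the hypotheses of the Discrete Evolution Variational Inequality lemma (x̂ = J_h¹ x and x' = J_h² x̂ via the discrete EVI), one has (3/(4h)) d²(x',x) ≤ φ(x) − φ(x') + [φ¹(x') − φ¹(x̂)]⁺, where φ = φ¹ + φ². -/
/-- Under the discrete EVI hypotheses, `(3/(4h)) d²(x',x) ≤ φ(x) − φ(x') + [φ¹(x') − φ¹(x̂)]⁺`. -/
theorem stmt4 {X : Type*} [MetricSpace X] (φ1 φ2 : X → ℝ) (D1 D2 : Set X)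
    (h : ℝ) (hh : 0 < h) (x xhat x' : X)
    (hx : x ∈ D1 ∩ D2) (hxhat : xhat ∈ D1) (hx' : x' ∈ D1 ∩ D2)
    (hEVI1 : ∀ z ∈ D1, (1 / (2 * h)) * (dist xhat z ^ 2 - dist x z ^ 2)
      + (1 / (2 * h)) * dist xhat x ^ 2 + φ1 xhat ≤ φ1 z)
    (hEVI2 : ∀ z ∈ D2, (1 / (2 * h)) * (dist x' z ^ 2 - dist xhat z ^ 2)
      + (1 / (2 * h)) * dist x' xhat ^ 2 + φ2 x' ≤ φ2 z) :
    (3 / (4 * h)) * dist x' x ^ 2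
      ≤ (φ1 x + φ2 x) - (φ1 x' + φ2 x') + max (φ1 x' - φ1 xhat) 0 := by
  have h1 := hEVI1 x hx.1
  have h2 := hEVI2 x hx.2
  simp only [dist_self] at h1
  have htri : dist x' x ≤ dist x' xhat + dist xhat x := dist_triangle _ _ _
  have hmax : φ1 x' - φ1 xhat ≤ max (φ1 x' - φ1 xhat) 0 := le_max_left _ _
  have hc : (0:ℝ) < 1 / (2 * h) := by positivity
  have hd2 : dist x' x ^ 2 ≤ (dist x' xhat + dist xhat x) ^ 2 := by
    nlinarith [dist_nonneg (x := x') (y := x), dist_nonneg (x := x') (y := xhat),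
      dist_nonneg (x := xhat) (y := x)]
  have hgoal : (3 / (4 * h)) = (3/2) * (1 / (2 * h)) := by field_simp; ring
  rw [hgoal]
  nlinarith [mul_le_mul_of_nonneg_left hd2 hc.le,
    mul_nonneg hc.le (sq_nonneg (dist x' xhat - dist xhat x))]
end

section
/- Suppose φ¹ takes values in [0,∞] and there exists α ≥ 0 such that φ¹(J_h² x) ≤ e^{αh} φ¹(x) for all h > 0 and x ∈ D(φ). Then for any discretisation (h_k)_{k=1}^n with 2Σ h_k ≤ T and any x ∈ D(φ), the cumulative defect Σ_{k=1}^n [φ¹(x_h^k) − φ¹(x̂_h^k)]⁺ is bounded by (e^{αT/2} − 1) φ¹(x). -/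
/-- The splitting scheme: `x⁰ = x`, `x̂ᵏ = J¹_{h_k} xᵏ⁻¹`, `xᵏ = J²_{h_k} x̂ᵏ`. -/
def splitScheme {X : Type*} (J1 J2 : ℝ → X → X) (hs : ℕ → ℝ) (x : X) : ℕ → X
  | 0 => x
  | k + 1 => J2 (hs (k + 1)) (J1 (hs (k + 1)) (splitScheme J1 J2 hs x k))

/-- If `φ¹ ≥ 0` and `φ¹(J²_h x) ≤ e^{αh} φ¹(x)` on `D(φ)`, then the cumulative defect of the
splitting scheme is bounded by `(e^{αT/2} − 1) φ¹(x)` for any discretisation with `2 ∑ h_k ≤ T`. -/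
theorem stmt8 {X : Type*} [MetricSpace X] (φ1 φ2 : X → ℝ) (D1 D2 : Set X)
    (J1 J2 : ℝ → X → X) (α T : ℝ) (hα : 0 ≤ α)
    (hφ1nonneg : ∀ x : X, 0 ≤ φ1 x)
    (hJ1dom : ∀ h : ℝ, 0 < h → ∀ x ∈ D1 ∩ D2, J1 h x ∈ D1 ∩ D2)
    (hJ2dom : ∀ h : ℝ, 0 < h → ∀ x ∈ D1 ∩ D2, J2 h x ∈ D1 ∩ D2)
    (hJ1dec : ∀ h : ℝ, 0 < h → ∀ x ∈ D1 ∩ D2, φ1 (J1 h x) ≤ φ1 x)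
    (hcompat : ∀ h : ℝ, 0 < h → ∀ x ∈ D1 ∩ D2, φ1 (J2 h x) ≤ Real.exp (α * h) * φ1 x)
    (n : ℕ) (hs : ℕ → ℝ) (hpos : ∀ k ∈ Finset.Icc 1 n, 0 < hs k)
    (hT : 2 * ∑ k ∈ Finset.Icc 1 n, hs k ≤ T)
    (x : X) (hx : x ∈ D1 ∩ D2) :
    ∑ k ∈ Finset.Icc 1 n,
        max (φ1 (splitScheme J1 J2 hs x k)
          - φ1 (J1 (hs k) (splitScheme J1 J2 hs x (k - 1)))) 0
      ≤ (Real.exp (α * T / 2) - 1) * φ1 x := by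

  set S : ℕ → ℝ := fun k => ∑ j ∈ Finset.Icc 1 k, hs j with hS
  have hmem : ∀ k, k ≤ n → splitScheme J1 J2 hs x k ∈ D1 ∩ D2 := by
    intro k
    induction k with
    | zero => intro _; exact hx
    | succ k ih =>
      intro hk
      have hp : 0 < hs (k + 1) := hpos _ (Finset.mem_Icc.mpr ⟨by omega, hk⟩)
      exact hJ2dom _ hp _ (hJ1dom _ hp _ (ih (by omega)))
  have hSsucc : ∀ k : ℕ, S (k + 1) = S k + hs (k + 1) := by
    intro k
    simp [hS, Finset.sum_Icc_succ_top (Nat.succ_le_succ (Nat.zero_le k))]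
  have hval : ∀ k, k ≤ n → φ1 (splitScheme J1 J2 hs x k) ≤ Real.exp (α * S k) * φ1 x := by
    intro k
    induction k with
    | zero => intro _; simp [hS, splitScheme]
    | succ k ih =>
      intro hk
      have hk' : k ≤ n := by omega
      have hp : 0 < hs (k + 1) := hpos _ (Finset.mem_Icc.mpr ⟨by omega, hk⟩)
      have hm := hmem k hk'
      have h1 := hJ1dec _ hp _ hm
      have h2 := hcompat _ hp _ (hJ1dom _ hp _ hm)
      calc φ1 (splitScheme J1 J2 hs x (k + 1))
          ≤ Real.exp (α * hs (k + 1)) * φ1 (J1 (hs (k + 1)) (splitScheme J1 J2 hs x k)) := h2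
        _ ≤ Real.exp (α * hs (k + 1)) * φ1 (splitScheme J1 J2 hs x k) :=
            mul_le_mul_of_nonneg_left h1 (Real.exp_pos _).le
        _ ≤ Real.exp (α * hs (k + 1)) * (Real.exp (α * S k) * φ1 x) :=
            mul_le_mul_of_nonneg_left (ih hk') (Real.exp_pos _).le
        _ = Real.exp (α * S (k + 1)) * φ1 x := by
            rw [hSsucc k, mul_add, Real.exp_add]; ring
  have hterm : ∀ k ∈ Finset.Icc 1 n,
      max (φ1 (splitScheme J1 J2 hs x k)
        - φ1 (J1 (hs k) (splitScheme J1 J2 hs x (k - 1)))) 0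
      ≤ Real.exp (α * S k) * φ1 x - Real.exp (α * S (k - 1)) * φ1 x := by
    intro k hk
    obtain ⟨h1k, hkn⟩ := Finset.mem_Icc.mp hk
    obtain ⟨m, rfl⟩ : ∃ m, k = m + 1 := ⟨k - 1, by omega⟩
    simp only [Nat.add_sub_cancel]
    have hp : 0 < hs (m + 1) := hpos _ hk
    have hm := hmem m (by omega)
    have h1 := hJ1dec _ hp _ hm
    have h2 := hcompat _ hp _ (hJ1dom _ hp _ hm)
    have hvm := hval m (by omega)
    have hexp1 : (1 : ℝ) ≤ Real.exp (α * hs (m + 1)) :=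
      Real.one_le_exp (by positivity)
    have hhat : φ1 (J1 (hs (m + 1)) (splitScheme J1 J2 hs x m)) ≤ Real.exp (α * S m) * φ1 x :=
      h1.trans hvm
    have hnn := hφ1nonneg (J1 (hs (m + 1)) (splitScheme J1 J2 hs x m))
    have key : φ1 (splitScheme J1 J2 hs x (m + 1))
        - φ1 (J1 (hs (m + 1)) (splitScheme J1 J2 hs x m))
        ≤ Real.exp (α * S (m + 1)) * φ1 x - Real.exp (α * S m) * φ1 x := by
      have step1 : φ1 (splitScheme J1 J2 hs x (m + 1))
          - φ1 (J1 (hs (m + 1)) (splitScheme J1 J2 hs x m))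
          ≤ (Real.exp (α * hs (m + 1)) - 1) * φ1 (J1 (hs (m + 1)) (splitScheme J1 J2 hs x m)) := by
        have h2' : φ1 (splitScheme J1 J2 hs x (m + 1))
            ≤ Real.exp (α * hs (m + 1)) * φ1 (J1 (hs (m + 1)) (splitScheme J1 J2 hs x m)) := h2
        nlinarith [h2']
      have step2 : (Real.exp (α * hs (m + 1)) - 1) * φ1 (J1 (hs (m + 1)) (splitScheme J1 J2 hs x m))
          ≤ (Real.exp (α * hs (m + 1)) - 1) * (Real.exp (α * S m) * φ1 x) :=
        mul_le_mul_of_nonneg_left hhat (by linarith)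
      have heq : (Real.exp (α * hs (m + 1)) - 1) * (Real.exp (α * S m) * φ1 x)
          = Real.exp (α * S (m + 1)) * φ1 x - Real.exp (α * S m) * φ1 x := by
        rw [hSsucc m, mul_add, Real.exp_add]; ring
      linarith
    refine max_le key ?_
    have hx0 := hφ1nonneg x
    have : Real.exp (α * S m) ≤ Real.exp (α * S (m + 1)) := by
      apply Real.exp_le_exp.mpr
      have : 0 ≤ α * hs (m + 1) := by positivity
      rw [hSsucc m]; nlinarith
    nlinarith
  have htel : ∀ N : ℕ, ∑ k ∈ Finset.Icc 1 N,
      (Real.exp (α * S k) * φ1 x - Real.exp (α * S (k - 1)) * φ1 x)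
      = Real.exp (α * S N) * φ1 x - Real.exp (α * S 0) * φ1 x := by
    intro N
    induction N with
    | zero => simp
    | succ N ih =>
      rw [Finset.sum_Icc_succ_top (by omega : 1 ≤ N + 1), ih]
      simp only [Nat.add_sub_cancel]
      ring
  calc ∑ k ∈ Finset.Icc 1 n,
        max (φ1 (splitScheme J1 J2 hs x k)
          - φ1 (J1 (hs k) (splitScheme J1 J2 hs x (k - 1)))) 0
      ≤ ∑ k ∈ Finset.Icc 1 n,
        (Real.exp (α * S k) * φ1 x - Real.exp (α * S (k - 1)) * φ1 x) :=
        Finset.sum_le_sum hterm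
    _ = Real.exp (α * S n) * φ1 x - Real.exp (α * S 0) * φ1 x := htel n
    _ ≤ (Real.exp (α * T / 2) - 1) * φ1 x := by
        have hS0 : S 0 = 0 := by simp [hS]
        have hSn : α * S n ≤ α * T / 2 := by
          have : S n ≤ T / 2 := by simp only [hS]; linarith
          nlinarith
        have := Real.exp_le_exp.mpr hSn
        have hx0 := hφ1nonneg x
        rw [hS0]
        simp only [mul_zero, Real.exp_zero, one_mul]
        nlinarith
end

section
/- Entropy estimate under the potential resolvent: Let V ∈ C²(ℝ^d) be convex with ΔV ≤ c, h > 0, and μ = ρℒ^d ∈ P₂(ℝ^d) with finite Boltzmann entropy H(μ) = ∫ ρ log ρ dx. Then the pushforward μ¹ = (J_h^V)_# μ has density ρ¹(x) = ρ(x + h∇V(x)) det(I + hD²V(x)) and satisfies H(μ¹) ≤ H(μ) + ch. -/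
open MeasureTheory

/-- The Hessian matrix of `V : ℝ^d → ℝ`, as the Jacobian of the gradient in the standard basis. -/
noncomputable def hessMat {d : ℕ} (V : EuclideanSpace ℝ (Fin d) → ℝ)
    (x : EuclideanSpace ℝ (Fin d)) : Matrix (Fin d) (Fin d) ℝ :=
  Matrix.of fun i j => fderiv ℝ (gradient V) x (EuclideanSpace.single j 1) i

section Aux
open InnerProductSpace Matrix

variable {d : ℕ}
local notation "E" => EuclideanSpace ℝ (Fin d)

theorem aux_deriv_nonneg_of_monotone (φ : ℝ → ℝ) (m : ℝ) (hm : HasDerivAt φ m 0)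
    (hmono : Monotone φ) : 0 ≤ m := by
  have := hasDerivAt_iff_tendsto_slope.1 hm
  refine ge_of_tendsto this ?_
  filter_upwards [self_mem_nhdsWithin] with t ht
  rw [slope_def_field]
  rcases lt_or_gt_of_ne (Set.mem_compl_singleton_iff.1 ht) with h | h
  · rw [div_nonneg_iff]
    exact Or.inr ⟨by simpa using hmono h.le, by linarith⟩
  · rw [div_nonneg_iff]
    exact Or.inl ⟨by simpa using hmono h.le, by linarith⟩

theorem aux_grad_contDiff (V : E → ℝ) (hV : ContDiff ℝ 2 V) : ContDiff ℝ 1 (gradient V) := by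
  have : (gradient V) = fun x => (toDual ℝ E).symm (fderiv ℝ V x) := rfl
  rw [this]
  exact (toDual ℝ E).symm.contDiff.comp (hV.fderiv_right (le_refl _))

theorem aux_mono (V : E → ℝ) (hV : ContDiff ℝ 2 V) (hconv : ConvexOn ℝ Set.univ V) (a b : E) :
    0 ≤ ⟪gradient V b - gradient V a, b - a⟫_ℝ := by
  have hdiff : Differentiable ℝ V := hV.differentiable (by norm_num)
  have hfd : ∀ y w, fderiv ℝ V y w = ⟪gradient V y, w⟫_ℝ := by
    intro y w
    rw [(hdiff y).hasFDerivAt.hasGradientAt.hasFDerivAt.fderiv]; rfl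
  set γ : ℝ → E := fun t => a + t • (b - a) with hγ
  have hγd : ∀ t : ℝ, HasDerivAt γ (b - a) t := by
    intro t
    simpa [hγ] using ((hasDerivAt_id t).smul_const (b - a)).const_add a
  have hg : ∀ t : ℝ, HasDerivAt (V ∘ γ) (⟪gradient V (γ t), b - a⟫_ℝ) t := by
    intro t
    have := (hdiff (γ t)).hasFDerivAt.comp_hasDerivAt t (hγd t)
    rw [← hfd]; exact this
  have hgc : ConvexOn ℝ Set.univ (V ∘ γ) := by
    have : ConvexOn ℝ ((fun t : ℝ => a + t • (b - a)) ⁻¹' Set.univ)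
        (V ∘ fun t : ℝ => a + t • (b - a)) := by
      have haff : (fun t : ℝ => a + t • (b - a)) = ⇑(AffineMap.lineMap a b) := by
        funext t; simp [AffineMap.lineMap_apply]; module
      rw [haff]
      exact hconv.comp_affineMap _
    simpa using this
  have hmono := hgc.monotoneOn_deriv (fun x _ => (hg x).differentiableAt)
  have h01 : deriv (V ∘ γ) 0 ≤ deriv (V ∘ γ) 1 :=
    hmono (Set.mem_univ 0) (Set.mem_univ 1) zero_le_one
  rw [(hg 0).deriv, (hg 1).deriv] at h01
  have h0 : γ 0 = a := by simp [hγ]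
  have h1 : γ 1 = b := by simp [hγ]
  rw [h0, h1] at h01
  rw [inner_sub_left]
  linarith

theorem aux_psd (V : E → ℝ) (hgrad : ContDiff ℝ 1 (gradient V))
    (hmono : ∀ a b : E, 0 ≤ ⟪gradient V b - gradient V a, b - a⟫_ℝ) (x v : E) :
    0 ≤ ⟪fderiv ℝ (gradient V) x v, v⟫_ℝ := by
  set φ : ℝ → ℝ := fun t => ⟪gradient V (x + t • v), v⟫_ℝ with hφ
  have hd : HasDerivAt φ ⟪fderiv ℝ (gradient V) x v, v⟫_ℝ 0 := by
    have hγ : HasDerivAt (fun t : ℝ => x + t • v) v 0 := by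
      simpa using ((hasDerivAt_id (0:ℝ)).smul_const v).const_add x
    have h1 : HasDerivAt (fun t : ℝ => gradient V (x + t • v)) (fderiv ℝ (gradient V) x v) 0 := by
      have := ((hgrad.differentiable one_ne_zero (x + (0:ℝ) • v)).hasFDerivAt).comp_hasDerivAt 0 hγ
      rw [zero_smul, add_zero] at this; exact this
    have h2 := ((innerSL ℝ v).hasFDerivAt).comp_hasDerivAt 0 h1
    rw [real_inner_comm]
    simpa [hφ, Function.comp_def, mul_comm] using h2
  refine aux_deriv_nonneg_of_monotone φ _ hd ?_
  intro s t hst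
  rcases eq_or_lt_of_le hst with rfl | hlt
  · exact le_refl _
  have h3 := hmono (x + s • v) (x + t • v)
  have hsub : (x + t • v) - (x + s • v) = (t - s) • v := by module
  rw [hsub, inner_sub_left, real_inner_smul_right, real_inner_smul_right] at h3
  simp only [hφ]
  nlinarith [h3]

theorem aux_mulVec_toMatrix (L : E →L[ℝ] E) (v : Fin d → ℝ) :
    (LinearMap.toMatrix (EuclideanSpace.basisFun (Fin d) ℝ).toBasis
      (EuclideanSpace.basisFun (Fin d) ℝ).toBasis L.toLinearMap) *ᵥ v
    = ⇑(L ((EuclideanSpace.equiv (Fin d) ℝ).symm v)) := by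
  have := LinearMap.toMatrix_mulVec_repr (EuclideanSpace.basisFun (Fin d) ℝ).toBasis
    (EuclideanSpace.basisFun (Fin d) ℝ).toBasis L.toLinearMap
    ((EuclideanSpace.equiv (Fin d) ℝ).symm v)
  have hr : ∀ w : E, ⇑((EuclideanSpace.basisFun (Fin d) ℝ).toBasis.repr w) = w.ofLp := fun w => rfl
  simpa [EuclideanSpace.basisFun_repr, hr] using this

theorem aux_matrix (A : Matrix (Fin d) (Fin d) ℝ) (hA : A.IsHermitian)
    (hq : ∀ v : Fin d → ℝ, 0 ≤ v ⬝ᵥ A *ᵥ v) (h : ℝ) (hh : 0 < h) :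
    (1 : ℝ) ≤ (1 + h • A).det ∧ Real.log (1 + h • A).det ≤ h * A.trace := by
  have hB : (1 + h • A).IsHermitian := by
    show (1 + h • A)ᴴ = 1 + h • A
    have hAt : Aᵀ = A := by rw [← conjTranspose_eq_transpose_of_trivial, hA.eq]
    simp [conjTranspose_add, conjTranspose_smul, hAt]
  have heig : ∀ i, 1 ≤ hB.eigenvalues i := by
    intro i
    have h1 := hB.eigenvalues_eq i
    set v := ⇑(hB.eigenvectorBasis i) with hv
    have hnorm : ‖hB.eigenvectorBasis i‖ = 1 := hB.eigenvectorBasis.orthonormal.1 i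
    have hvv : v ⬝ᵥ v = 1 := by
      have h2 : v ⬝ᵥ v = ⟪hB.eigenvectorBasis i, hB.eigenvectorBasis i⟫_ℝ := by
        simp only [dotProduct, PiLp.inner_apply, hv, RCLike.inner_apply, conj_trivial]
      rw [h2, real_inner_self_eq_norm_sq, hnorm]; norm_num
    have hmul : (1 + h • A) *ᵥ v = v + h • (A *ᵥ v) := by
      simp [add_mulVec, smul_mulVec]
    rw [hmul] at h1
    have h3 : star v ⬝ᵥ (v + h • (A *ᵥ v)) = v ⬝ᵥ v + h * (v ⬝ᵥ (A *ᵥ v)) := by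
      simp [star_trivial, dotProduct_add, dotProduct_smul, smul_eq_mul]
    rw [h1, h3, hvv]
    have := hq v
    simp only [RCLike.re_to_real]
    nlinarith
  have heig0 : ∀ i, (0:ℝ) < hB.eigenvalues i := fun i => lt_of_lt_of_le one_pos (heig i)
  have hdet : (1 + h • A).det = ∏ i, hB.eigenvalues i := by
    simpa using hB.det_eq_prod_eigenvalues
  have hprod1 : (1:ℝ) ≤ ∏ i, hB.eigenvalues i := by
    calc (1:ℝ) = ∏ _i : Fin d, 1 := by simp
    _ ≤ ∏ i, hB.eigenvalues i :=
      Finset.prod_le_prod (fun _ _ => zero_le_one) (fun i _ => heig i)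
  have htr : (1 + h • A).trace = ∑ i, hB.eigenvalues i := by
    have hst := hB.spectral_theorem
    have hU : star (hB.eigenvectorUnitary : Matrix (Fin d) (Fin d) ℝ)
        * (hB.eigenvectorUnitary : Matrix (Fin d) (Fin d) ℝ) = 1 :=
      Unitary.coe_star_mul_self _
    calc (1 + h • A).trace
        = ((hB.eigenvectorUnitary : Matrix (Fin d) (Fin d) ℝ)
            * diagonal (RCLike.ofReal ∘ hB.eigenvalues)
            * star (hB.eigenvectorUnitary : Matrix (Fin d) (Fin d) ℝ)).trace := by rw [Unitary.conjStarAlgAut_apply] at hst; rw [← hst]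
      _ = (star (hB.eigenvectorUnitary : Matrix (Fin d) (Fin d) ℝ)
            * (hB.eigenvectorUnitary : Matrix (Fin d) (Fin d) ℝ)
            * diagonal (RCLike.ofReal ∘ hB.eigenvalues)).trace := by rw [trace_mul_cycle]
      _ = ∑ i, hB.eigenvalues i := by rw [hU, one_mul]; simp [trace_diagonal]
  refine ⟨by rw [hdet]; exact hprod1, ?_⟩
  have htrA : (1 + h • A).trace = d + h * A.trace := by
    simp [trace_add, trace_smul, trace_one, smul_eq_mul]
  rw [hdet, Real.log_prod (fun i _ => (heig0 i).ne')]
  calc ∑ i, Real.log (hB.eigenvalues i)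
      ≤ ∑ i, (hB.eigenvalues i - 1) :=
        Finset.sum_le_sum (fun i _ => Real.log_le_sub_one_of_pos (heig0 i))
    _ = (∑ i, hB.eigenvalues i) - d := by
        rw [Finset.sum_sub_distrib]; simp
    _ = h * A.trace := by rw [← htr, htrA]; ring

theorem aux_hess_symm (V : E → ℝ) (hV : ContDiff ℝ 2 V)
    (hgrad : ContDiff ℝ 1 (gradient V)) (x v w : E) :
    ⟪fderiv ℝ (gradient V) x v, w⟫_ℝ = ⟪fderiv ℝ (gradient V) x w, v⟫_ℝ := by
  set TD : E →L[ℝ] (E →L[ℝ] ℝ) :=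
    (toDual ℝ E).toContinuousLinearEquiv.toContinuousLinearMap with hTD
  have hf' : ∀ y, HasFDerivAt V (TD (gradient V y)) y := by
    intro y
    have h1 : HasFDerivAt V (fderiv ℝ V y) y := (hV.differentiable (by norm_num) y).hasFDerivAt
    have h2 : TD (gradient V y) = fderiv ℝ V y := by
      simp [hTD, gradient]
    rwa [h2]
  have hx : HasFDerivAt (fun y => TD (gradient V y)) (TD.comp (fderiv ℝ (gradient V) x)) x :=
    TD.hasFDerivAt.comp x (hgrad.differentiable one_ne_zero x).hasFDerivAt
  have hsymm := second_derivative_symmetric hf' hx v w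
  have happ : ∀ a b : E, (TD.comp (fderiv ℝ (gradient V) x)) a b
      = ⟪fderiv ℝ (gradient V) x a, b⟫_ℝ := by
    intro a b; simp [hTD, toDual_apply_apply]
  rw [happ, happ] at hsymm
  rw [hsymm]

theorem aux_hess_herm (V : E → ℝ) (hV : ContDiff ℝ 2 V)
    (hgrad : ContDiff ℝ 1 (gradient V)) (x : E) : (hessMat V x).IsHermitian := by
  show (hessMat V x)ᴴ = hessMat V x
  ext i j
  have h1 : ∀ (u : E) (k : Fin d), u k = ⟪u, EuclideanSpace.single k 1⟫_ℝ := by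
    intro u k; simp [EuclideanSpace.inner_single_right]
  simp only [conjTranspose_apply, hessMat, Matrix.of_apply, star_trivial]
  rw [h1 (fderiv ℝ (gradient V) x (EuclideanSpace.single i 1)) j,
    h1 (fderiv ℝ (gradient V) x (EuclideanSpace.single j 1)) i, aux_hess_symm V hV hgrad]

theorem aux_hess_toMatrix (V : E → ℝ) (x : E) :
    hessMat V x = LinearMap.toMatrix (EuclideanSpace.basisFun (Fin d) ℝ).toBasis
      (EuclideanSpace.basisFun (Fin d) ℝ).toBasis (fderiv ℝ (gradient V) x).toLinearMap := by
  ext i j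
  simp [hessMat, LinearMap.toMatrix_apply, EuclideanSpace.basisFun_apply]

theorem aux_det_eq (V : E → ℝ) (h : ℝ) (x : E) :
    (ContinuousLinearMap.id ℝ E + h • fderiv ℝ (gradient V) x).det
      = (1 + h • hessMat V x).det := by
  set b := (EuclideanSpace.basisFun (Fin d) ℝ).toBasis with hb
  rw [ContinuousLinearMap.det, ← LinearMap.det_toMatrix b]
  congr 1
  rw [aux_hess_toMatrix]
  simp only [ContinuousLinearMap.coe_add, ContinuousLinearMap.coe_smul,
    ContinuousLinearMap.coe_id, map_add, _root_.map_smul]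
  congr 1
  exact LinearMap.toMatrix_id b

theorem aux_quadform (V : E → ℝ) (hgrad : ContDiff ℝ 1 (gradient V))
    (hmono : ∀ a b : E, 0 ≤ ⟪gradient V b - gradient V a, b - a⟫_ℝ)
    (x : E) (v : Fin d → ℝ) : 0 ≤ v ⬝ᵥ (hessMat V x) *ᵥ v := by
  rw [aux_hess_toMatrix, aux_mulVec_toMatrix]
  set v' : E := (EuclideanSpace.equiv (Fin d) ℝ).symm v with hv'
  have h1 : v ⬝ᵥ ⇑(fderiv ℝ (gradient V) x v') = ⟪fderiv ℝ (gradient V) x v', v'⟫_ℝ := by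
    simp [dotProduct, PiLp.inner_apply, hv', mul_comm]
  rw [h1]
  exact aux_psd V hgrad hmono x v'

end Aux


open InnerProductSpace in
/-- Entropy estimate under the potential resolvent: if `V ∈ C²` is convex with `ΔV ≤ c`,
`J = (I + h∇V)⁻¹`, and `μ = ρ ℒ^d ∈ P₂(ℝ^d)` has finite Boltzmann entropy, then `J_# μ` has
density `ρ¹(x) = ρ(x + h∇V(x)) det(I + h D²V(x))` and `H(J_# μ) ≤ H(μ) + c h`. -/
theorem stmt14 {d : ℕ} (V : EuclideanSpace ℝ (Fin d) → ℝ)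
    (hV : ContDiff ℝ 2 V) (hconv : ConvexOn ℝ Set.univ V)
    (c : ℝ) (hc : 0 ≤ c) (hΔ : ∀ x, (hessMat V x).trace ≤ c)
    (h : ℝ) (hh : 0 < h)
    (J : EuclideanSpace ℝ (Fin d) → EuclideanSpace ℝ (Fin d))
    (hJm : Measurable J)
    (hJ : ∀ x, J x + h • gradient V (J x) = x)
    (ρ : EuclideanSpace ℝ (Fin d) → ℝ) (hρm : Measurable ρ) (hρ0 : ∀ x, 0 ≤ ρ x)
    (μ : Measure (EuclideanSpace ℝ (Fin d)))
    (hμ : μ = volume.withDensity (fun x => ENNReal.ofReal (ρ x)))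
    (hμp : IsProbabilityMeasure μ) (hμ2 : Integrable (fun x => ‖x‖ ^ 2) μ)
    (hent : Integrable (fun x => ρ x * Real.log (ρ x)) volume) :
    μ.map J = volume.withDensity (fun x => ENNReal.ofReal
        (ρ (x + h • gradient V x) * (1 + h • hessMat V x).det))
    ∧ (∫ x, (ρ (x + h • gradient V x) * (1 + h • hessMat V x).det)
          * Real.log (ρ (x + h • gradient V x) * (1 + h • hessMat V x).det))
        ≤ (∫ x, ρ x * Real.log (ρ x)) + c * h := by
  classical
  have hgrad : ContDiff ℝ 1 (gradient V) := aux_grad_contDiff V hV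
  have hmono : ∀ a b : EuclideanSpace ℝ (Fin d),
      0 ≤ ⟪gradient V b - gradient V a, b - a⟫_ℝ := aux_mono V hV hconv
  set T : EuclideanSpace ℝ (Fin d) → EuclideanSpace ℝ (Fin d) :=
    fun x => x + h • gradient V x with hT
  set T' : EuclideanSpace ℝ (Fin d) → (EuclideanSpace ℝ (Fin d) →L[ℝ] EuclideanSpace ℝ (Fin d)) :=
    fun x => ContinuousLinearMap.id ℝ (EuclideanSpace ℝ (Fin d)) + h • fderiv ℝ (gradient V) x
    with hT'def
  have hT' : ∀ x, HasFDerivAt T (T' x) x := fun x =>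
    (hasFDerivAt_id x).add (((hgrad.differentiable one_ne_zero x).hasFDerivAt).const_smul h)
  set D : EuclideanSpace ℝ (Fin d) → ℝ := fun x => (1 + h • hessMat V x).det with hD
  have hmx := fun x => aux_matrix (hessMat V x) (aux_hess_herm V hV hgrad x)
    (aux_quadform V hgrad hmono x) h hh
  have hD1 : ∀ x, (1:ℝ) ≤ D x := fun x => (hmx x).1
  have hD0 : ∀ x, (0:ℝ) < D x := fun x => lt_of_lt_of_le one_pos (hD1 x)
  have hlog : ∀ x, Real.log (D x) ≤ c * h := by
    intro x
    refine le_trans (hmx x).2 ?_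
    rw [mul_comm]
    exact mul_le_mul_of_nonneg_right (hΔ x) hh.le
  have hlog0 : ∀ x, 0 ≤ Real.log (D x) := fun x => Real.log_nonneg (hD1 x)
  have hdet : ∀ x, (T' x).det = D x := fun x => aux_det_eq V h x
  have habsdet : ∀ x, |(T' x).det| = D x := by
    intro x; rw [hdet x, abs_of_pos (hD0 x)]
  -- injectivity
  have hinj : Function.Injective T := by
    intro a b hab
    have hsub : b - a = (-h) • (gradient V b - gradient V a) := by
      have h0 : a + h • gradient V a = b + h • gradient V b := hab
      have h1 : b - a = (a + h • gradient V a) - a - h • gradient V b := by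
        rw [h0]; module
      rw [h1]; module
    have h3 : ⟪b - a, b - a⟫_ℝ ≤ 0 := by
      calc ⟪b - a, b - a⟫_ℝ = ⟪(-h) • (gradient V b - gradient V a), b - a⟫_ℝ := by rw [← hsub]
        _ = (-h) * ⟪gradient V b - gradient V a, b - a⟫_ℝ := real_inner_smul_left _ _ _
        _ ≤ 0 := by nlinarith [hmono a b]
    have h4 : b - a = 0 := by
      have := real_inner_self_nonneg (x := b - a)
      have h5 : ⟪b - a, b - a⟫_ℝ = 0 := le_antisymm h3 this
      exact inner_self_eq_zero.1 h5
    have : b = a := by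
      have := sub_eq_zero.1 h4; exact this
    exact this.symm
  have hTJ : ∀ y, T (J y) = y := hJ
  have hsurj : Function.Surjective T := fun y => ⟨J y, hTJ y⟩
  have himg : T '' Set.univ = Set.univ := by
    rw [Set.image_univ]; exact hsurj.range_eq
  have hJT : ∀ a, J (T a) = a := fun a => hinj (hTJ (T a))
  have hpre : ∀ s : Set (EuclideanSpace ℝ (Fin d)), J ⁻¹' s = T '' s := by
    intro s
    ext x
    constructor
    · intro hx; exact ⟨J x, hx, hTJ x⟩
    · rintro ⟨a, ha, rfl⟩; simpa [hJT a] using ha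
  -- measurability / continuity
  have hTc : Continuous T := continuous_id.add ((hgrad.continuous).const_smul h)
  have hDc : Continuous D := by
    have hfd : Continuous (fun x => fderiv ℝ (gradient V) x) :=
      (hgrad.fderiv_right (m := 0) le_rfl).continuous
    have hentries : ∀ i j, Continuous fun x => (1 + h • hessMat V x) i j := by
      intro i j
      have h1 : Continuous fun x => (fderiv ℝ (gradient V) x) (EuclideanSpace.single j 1) i := by
        have h2 : Continuous fun x => (fderiv ℝ (gradient V) x) (EuclideanSpace.single j 1) :=
          (ContinuousLinearMap.apply ℝ (EuclideanSpace ℝ (Fin d))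
            (EuclideanSpace.single j 1)).continuous.comp hfd
        exact (EuclideanSpace.proj i).continuous.comp h2
      simpa [Matrix.add_apply, Matrix.smul_apply, hessMat, Matrix.one_apply, Pi.add_def] using
        (continuous_const.add (h1.const_smul h) : Continuous fun x =>
          (1 : Matrix (Fin d) (Fin d) ℝ) i j + h • (hessMat V x i j))
    exact Continuous.matrix_det (continuous_matrix hentries)
  have hDm : Measurable D := hDc.measurable
  have hTm : Measurable T := hTc.measurable
  -- first part: the measure identity
  have hmap : μ.map J = volume.withDensity (fun x => ENNReal.ofReal (ρ (T x) * D x)) := by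
    ext s hs
    rw [Measure.map_apply hJm hs, hpre s, hμ]
    have hms : MeasurableSet (T '' s) := by rw [← hpre s]; exact hJm hs
    rw [withDensity_apply _ hms, withDensity_apply _ hs]
    have := lintegral_image_eq_lintegral_abs_det_fderiv_mul volume hs
      (fun x _ => (hT' x).hasFDerivWithinAt) (hinj.injOn) (fun y => ENNReal.ofReal (ρ y))
    rw [this]
    refine setLIntegral_congr_fun hs ?_
    intro x _
    beta_reduce
    rw [habsdet x, ← ENNReal.ofReal_mul (hD0 x).le, mul_comm (D x)]
  refine ⟨hmap, ?_⟩
  -- change of variables for real integrals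
  have hcov : ∀ g : EuclideanSpace ℝ (Fin d) → ℝ,
      ∫ x, g x = ∫ x, |(T' x).det| • g (T x) := by
    intro g
    rw [← setIntegral_univ (f := g), ← himg,
      integral_image_eq_integral_abs_det_fderiv_smul volume MeasurableSet.univ
        (fun x _ => (hT' x).hasFDerivWithinAt) hinj.injOn g, setIntegral_univ]
  have hcovInt : ∀ g : EuclideanSpace ℝ (Fin d) → ℝ, Integrable g volume →
      Integrable (fun x => |(T' x).det| • g (T x)) volume := by
    intro g hg
    have h2 : IntegrableOn g (T '' Set.univ) volume := by
      rw [himg, integrableOn_univ]; exact hg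
    have h1 := (integrableOn_image_iff_integrableOn_abs_det_fderiv_smul volume
      MeasurableSet.univ (fun x _ => (hT' x).hasFDerivWithinAt) hinj.injOn g).1 h2
    simpa [integrableOn_univ] using h1
  have hlint : ∫⁻ x, ENNReal.ofReal (ρ x) = 1 := by
    have h1 := hμp.measure_univ
    rw [hμ] at h1
    simpa [withDensity_apply _ MeasurableSet.univ] using h1
  have hρint : Integrable ρ volume := by
    refine ⟨hρm.aestronglyMeasurable, ?_⟩
    rw [HasFiniteIntegral]
    have h2 : ∀ x, ‖ρ x‖ₑ = ENNReal.ofReal (ρ x) := fun x =>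
      Real.enorm_eq_ofReal (hρ0 x)
    simp only [h2, hlint]
    exact ENNReal.one_lt_top
  have hint1 : ∫ x, ρ x = 1 := by
    rw [integral_eq_lintegral_of_nonneg_ae (ae_of_all _ hρ0) hρm.aestronglyMeasurable, hlint]
    simp
  set f₂ : EuclideanSpace ℝ (Fin d) → ℝ :=
    fun x => (ρ (T x) * D x) * Real.log (D x) with hf₂
  have hg₂int : Integrable (fun x => |(T' x).det| • ρ (T x)) volume := hcovInt ρ hρint
  have hf₂m : AEStronglyMeasurable f₂ volume :=
    (((hρm.comp hTm).mul hDm).mul (Real.measurable_log.comp hDm)).aestronglyMeasurable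
  have hf₂le : ∀ x, f₂ x ≤ (c * h) * (|(T' x).det| • ρ (T x)) := by
    intro x
    rw [habsdet x, smul_eq_mul]
    show (ρ (T x) * D x) * Real.log (D x) ≤ c * h * (D x * ρ (T x))
    have h1 : 0 ≤ ρ (T x) * D x := mul_nonneg (hρ0 _) (hD0 x).le
    calc (ρ (T x) * D x) * Real.log (D x) ≤ (ρ (T x) * D x) * (c * h) :=
        mul_le_mul_of_nonneg_left (hlog x) h1
      _ = c * h * (D x * ρ (T x)) := by ring
  have hf₂0 : ∀ x, 0 ≤ f₂ x := by
    intro x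
    have := hρ0 (T x); have := hD0 x; have := hlog0 x
    positivity
  have hf₂int : Integrable f₂ volume := by
    refine Integrable.mono (hg₂int.const_mul (c * h)) hf₂m (ae_of_all _ ?_)
    intro x
    rw [Real.norm_eq_abs, Real.norm_eq_abs, abs_of_nonneg (hf₂0 x)]
    refine le_trans (hf₂le x) (le_abs_self _)
  have hf₁int : Integrable (fun x => |(T' x).det| • (ρ (T x) * Real.log (ρ (T x)))) volume :=
    hcovInt _ hent
  have hsplit : ∀ x, (ρ (T x) * D x) * Real.log (ρ (T x) * D x)
      = |(T' x).det| • (ρ (T x) * Real.log (ρ (T x))) + f₂ x := by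
    intro x
    rw [habsdet x, smul_eq_mul]
    show _ = D x * (ρ (T x) * Real.log (ρ (T x))) + (ρ (T x) * D x) * Real.log (D x)
    rcases eq_or_lt_of_le (hρ0 (T x)) with h0 | h0
    · rw [← h0]; simp
    · rw [Real.log_mul h0.ne' (hD0 x).ne']; ring
  have goal2 : ∫ x, (ρ (T x) * D x) * Real.log (ρ (T x) * D x)
      ≤ (∫ x, ρ x * Real.log (ρ x)) + c * h := by
    calc ∫ x, (ρ (T x) * D x) * Real.log (ρ (T x) * D x)
        = ∫ x, (|(T' x).det| • (ρ (T x) * Real.log (ρ (T x))) + f₂ x) := by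
          congr 1; funext x; exact hsplit x
      _ = (∫ x, |(T' x).det| • (ρ (T x) * Real.log (ρ (T x)))) + ∫ x, f₂ x :=
          integral_add hf₁int hf₂int
      _ ≤ (∫ x, ρ x * Real.log (ρ x)) + c * h := by
          have e1 : ∫ x, |(T' x).det| • (ρ (T x) * Real.log (ρ (T x)))
              = ∫ x, ρ x * Real.log (ρ x) := (hcov (fun y => ρ y * Real.log (ρ y))).symm
          have e2 : ∫ x, f₂ x ≤ c * h := by
            calc ∫ x, f₂ x ≤ ∫ x, (c * h) * (|(T' x).det| • ρ (T x)) :=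
                integral_mono hf₂int (hg₂int.const_mul _) hf₂le
              _ = (c * h) * ∫ x, |(T' x).det| • ρ (T x) := integral_const_mul _ _
              _ = c * h := by rw [← hcov ρ, hint1, mul_one]
          rw [e1]
          linarith
  exact goal2
end

section
/- Rényi entropy estimate under the potential resolvent: Let V ∈ C²(ℝ^d) be convex with ΔV ≤ c, m > 1, h > 0, and μ = ρℒ^d ∈ P₂(ℝ^d) with finite Rényi entropy F(μ) = (1/(m−1))∫ρ^m dx. Then μ¹ = (J_h^V)_# μ satisfies F(μ¹) ≤ e^{(m−1)ch} F(μ). -/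
open MeasureTheory Matrix
open scoped RealInnerProductSpace


open scoped RealInnerProductSpace

lemma mono_hasDerivAt_nonneg {φ : ℝ → ℝ} (hφ : Monotone φ) {a t : ℝ}
    (hd : HasDerivAt φ a t) : 0 ≤ a := by
  have h1 := hasDerivAt_iff_tendsto_slope.1 hd
  have h2 : Filter.Tendsto (slope φ t) (nhdsWithin t (Set.Ioi t)) (nhds a) :=
    h1.mono_left (nhdsWithin_mono t (fun y hy => ne_of_gt hy))
  refine ge_of_tendsto h2 ?_
  filter_upwards [self_mem_nhdsWithin] with y hy
  have hty : t < y := hy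
  have : 0 ≤ (φ y - φ t) / (y - t) :=
    div_nonneg (sub_nonneg.2 (hφ hty.le)) (sub_nonneg.2 hty.le)
  simpa [slope_def_field] using this

section V
variable {E : Type*} [NormedAddCommGroup E] [InnerProductSpace ℝ E] [CompleteSpace E]
variable {V : E → ℝ}

/-- the 1-D directional derivative function is monotone for convex C¹ V -/
lemma dir_deriv_monotone (hV : ContDiff ℝ 2 V) (hconv : ConvexOn ℝ Set.univ V)
    (x v : E) : Monotone (fun t : ℝ => ⟪gradient V (x + t • v), v⟫) := by
  have hVd : Differentiable ℝ V := hV.differentiable (by norm_num)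
  set g : ℝ → ℝ := fun t => V (x + t • v) with hg
  have hgd : ∀ t : ℝ, HasDerivAt g ⟪gradient V (x + t • v), v⟫ t := by
    intro t
    have h1 : HasDerivAt (fun t : ℝ => x + t • v) v t := by
      simpa using ((hasDerivAt_id t).smul_const v).const_add x
    have h2 : HasFDerivAt V (fderiv ℝ V (x + t • v)) (x + t • v) :=
      (hVd _).hasFDerivAt
    have := h2.comp_hasDerivAt t h1
    have e : ⟪gradient V (x + t • v), v⟫ = fderiv ℝ V (x + t • v) v := by
      unfold gradient; exact InnerProductSpace.toDual_symm_apply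
    rw [e]; exact this
  have hgc : ConvexOn ℝ Set.univ g := by
    have h0 : ConvexOn ℝ ((AffineMap.lineMap (x : E) (x + v)) ⁻¹' Set.univ)
        (V ∘ (AffineMap.lineMap (x : E) (x + v))) :=
      hconv.comp_affineMap _
    have he : (V ∘ (AffineMap.lineMap (x : E) (x + v))) = g := by
      funext t
      simp [AffineMap.lineMap_apply, hg, add_comm]
    rw [he] at h0
    simpa using h0
  have hmono := hgc.monotoneOn_deriv (fun t _ => (hgd t).differentiableAt)
  intro s t hst
  have h1 : deriv g s = ⟪gradient V (x + s • v), v⟫ := (hgd s).deriv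
  have h2 : deriv g t = ⟪gradient V (x + t • v), v⟫ := (hgd t).deriv
  dsimp only
  rw [← h1, ← h2]
  exact hmono (by simp) (by simp) hst

lemma grad_monotone (hV : ContDiff ℝ 2 V) (hconv : ConvexOn ℝ Set.univ V)
    (x y : E) : 0 ≤ ⟪gradient V y - gradient V x, y - x⟫ := by
  have := dir_deriv_monotone hV hconv x (y - x) (zero_le_one (α := ℝ))
  simp only [zero_smul, add_zero, one_smul, add_sub_cancel] at this
  rw [inner_sub_left]
  linarith

lemma gradC1 (hV : ContDiff ℝ 2 V) : ContDiff ℝ 1 (gradient V) := by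
  have h1 : ContDiff ℝ 1 (fderiv ℝ V) := hV.fderiv_right (by norm_num)
  have : gradient V = (InnerProductSpace.toDual ℝ E).symm ∘ fderiv ℝ V := rfl
  rw [this]
  exact (InnerProductSpace.toDual ℝ E).symm.contDiff.comp h1

lemma hess_psd (hV : ContDiff ℝ 2 V) (hconv : ConvexOn ℝ Set.univ V)
    (x v : E) : 0 ≤ ⟪fderiv ℝ (gradient V) x v, v⟫ := by
  set φ : ℝ → ℝ := fun t => ⟪gradient V (x + t • v), v⟫ with hφdef
  have hmono : Monotone φ := dir_deriv_monotone hV hconv x v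
  have hB : HasFDerivAt (gradient V) (fderiv ℝ (gradient V) x) x :=
    (((gradC1 hV).differentiable one_ne_zero) x).hasFDerivAt
  have h1 : HasDerivAt (fun t : ℝ => x + t • v) v 0 := by
    simpa using ((hasDerivAt_id (0:ℝ)).smul_const v).const_add x
  have hB' : HasFDerivAt (gradient V) (fderiv ℝ (gradient V) x) (x + (0:ℝ) • v) := by
    simpa using hB
  have h2 : HasDerivAt (fun t : ℝ => gradient V (x + t • v))
      (fderiv ℝ (gradient V) x v) 0 := by
    have := hB'.comp_hasDerivAt 0 h1
    exact this
  have h3 : HasDerivAt φ ⟪fderiv ℝ (gradient V) x v, v⟫ 0 := by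
    have := h2.inner ℝ (hasDerivAt_const (0:ℝ) v)
    simpa [-inner_gradient_left] using this
  exact mono_hasDerivAt_nonneg hmono h3

lemma hess_symm (hV : ContDiff ℝ 2 V) (x v w : E) :
    ⟪fderiv ℝ (gradient V) x v, w⟫ = ⟪fderiv ℝ (gradient V) x w, v⟫ := by
  have hVd : Differentiable ℝ V := hV.differentiable (by norm_num)
  have hf : ∀ y, HasFDerivAt V (fderiv ℝ V y) y := fun y => (hVd y).hasFDerivAt
  have h1 : ContDiff ℝ 1 (fderiv ℝ V) := hV.fderiv_right (by norm_num)
  have hx : HasFDerivAt (fderiv ℝ V) (fderiv ℝ (fderiv ℝ V) x) x :=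
    ((h1.differentiable one_ne_zero) x).hasFDerivAt
  have hsymm := second_derivative_symmetric hf hx
  have hB : HasFDerivAt (gradient V) (fderiv ℝ (gradient V) x) x :=
    (((gradC1 hV).differentiable one_ne_zero) x).hasFDerivAt
  have hig : ∀ (y b : E), ⟪gradient V y, b⟫ = fderiv ℝ V y b := by
    intro y b
    unfold gradient
    exact InnerProductSpace.toDual_symm_apply
  have key : ∀ a b : E, ⟪fderiv ℝ (gradient V) x a, b⟫ = fderiv ℝ (fderiv ℝ V) x a b := by
    intro a b
    have e1 : HasFDerivAt (fun y => (fderiv ℝ V y) b)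
        ((ContinuousLinearMap.apply ℝ ℝ b).comp (fderiv ℝ (fderiv ℝ V) x)) x :=
      ((ContinuousLinearMap.apply ℝ ℝ b).hasFDerivAt).comp x hx
    have e3 : HasFDerivAt (fun y => ⟪b, gradient V y⟫)
        ((innerSL ℝ b).comp (fderiv ℝ (gradient V) x)) x :=
      ((innerSL ℝ b).hasFDerivAt).comp x hB
    have efun : (fun y => ⟪b, gradient V y⟫) = (fun y => (fderiv ℝ V y) b) := by
      funext y
      rw [real_inner_comm, hig y b]
    rw [efun] at e3
    have := e3.unique e1
    have happ := congrArg (fun (L : _ →L[ℝ] ℝ) => L a) this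
    simp only [ContinuousLinearMap.comp_apply, ContinuousLinearMap.apply_apply,
      innerSL_apply_apply] at happ
    rw [real_inner_comm]
    exact happ
  rw [key, key, hsymm v w]
end V

lemma herm_trace_eq {d : ℕ} {M : Matrix (Fin d) (Fin d) ℝ} (hM : M.IsHermitian) :
    M.trace = ∑ i, hM.eigenvalues i := by
  simpa using hM.trace_eq_sum_eigenvalues

lemma posDef_det_le_exp {d : ℕ} {M : Matrix (Fin d) (Fin d) ℝ} (hM : M.PosDef) :
    M.det ≤ Real.exp (M.trace - d) := by
  rw [hM.isHermitian.det_eq_prod_eigenvalues]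
  have h1 : ∀ i ∈ Finset.univ, (hM.isHermitian.eigenvalues i : ℝ) ≤
      Real.exp (hM.isHermitian.eigenvalues i - 1) := by
    intro i _
    have := Real.add_one_le_exp (hM.isHermitian.eigenvalues i - 1)
    push_cast
    linarith
  calc (∏ i, (hM.isHermitian.eigenvalues i : ℝ))
      ≤ ∏ i, Real.exp (hM.isHermitian.eigenvalues i - 1) := by
        apply Finset.prod_le_prod (fun i _ => ?_) h1
        exact_mod_cast (hM.eigenvalues_pos i).le
    _ = Real.exp (∑ i, (hM.isHermitian.eigenvalues i - 1)) := by rw [Real.exp_sum]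
    _ = Real.exp (M.trace - d) := by
        rw [Finset.sum_sub_distrib, herm_trace_eq hM.isHermitian]
        simp


section Main
variable {d : ℕ} {V : EuclideanSpace ℝ (Fin d) → ℝ}

local notation "E" => EuclideanSpace ℝ (Fin d)

/-- hessMat as toMatrix of the derivative of the gradient. -/
lemma hessMat_eq_toMatrix (V : E → ℝ) (x : E) :
    hessMat V x = LinearMap.toMatrix (PiLp.basisFun 2 ℝ (Fin d)) (PiLp.basisFun 2 ℝ (Fin d))
      (fderiv ℝ (gradient V) x : E →ₗ[ℝ] E) := by
  ext i j
  rw [LinearMap.toMatrix_apply, PiLp.basisFun_repr, PiLp.basisFun_apply]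
  rfl

lemma oneAdd_eq_toMatrix (V : E → ℝ) (h : ℝ) (x : E) :
    (1 + h • hessMat V x) = LinearMap.toMatrix (PiLp.basisFun 2 ℝ (Fin d))
      (PiLp.basisFun 2 ℝ (Fin d))
      ((ContinuousLinearMap.id ℝ E + h • fderiv ℝ (gradient V) x : E →L[ℝ] E) : E →ₗ[ℝ] E) := by
  rw [hessMat_eq_toMatrix]
  have hcoe : ((ContinuousLinearMap.id ℝ E + h • fderiv ℝ (gradient V) x : E →L[ℝ] E) :
      E →ₗ[ℝ] E) = LinearMap.id + h • (fderiv ℝ (gradient V) x : E →ₗ[ℝ] E) := rfl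
  rw [hcoe, map_add, _root_.map_smul, LinearMap.toMatrix_id]

lemma hessMat_posdef (hV : ContDiff ℝ 2 V) (hconv : ConvexOn ℝ Set.univ V)
    {h : ℝ} (hh : 0 < h) (x : E) : (1 + h • hessMat V x).PosDef := by
  have hsym : ∀ i j, hessMat V x i j = hessMat V x j i := by
    intro i j
    have hco : ∀ (u : E) (i : Fin d), u i = ⟪u, EuclideanSpace.single i (1:ℝ)⟫ := by
      intro u i
      rw [EuclideanSpace.inner_single_right]
      simp
    show (fderiv ℝ (gradient V) x (EuclideanSpace.single j 1)) i
        = (fderiv ℝ (gradient V) x (EuclideanSpace.single i 1)) j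
    rw [hco (fderiv ℝ (gradient V) x (EuclideanSpace.single j 1)) i,
      hco (fderiv ℝ (gradient V) x (EuclideanSpace.single i 1)) j, hess_symm hV]
  rw [Matrix.posDef_iff_dotProduct_mulVec]
  constructor
  · ext i j
    simp only [Matrix.conjTranspose_apply, star_trivial]
    simp only [Matrix.add_apply, Matrix.smul_apply, Matrix.one_apply, smul_eq_mul]
    rw [hsym i j]
    by_cases hij : i = j <;> simp [hij, Matrix.one_apply, eq_comm]
  · intro v hv
    have hsv : star v = v := by
      funext i; simp
    rw [hsv]
    have hsplit : dotProduct v ((1 + h • hessMat V x) *ᵥ v)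
        = dotProduct v v + h * dotProduct v (hessMat V x *ᵥ v) := by
      rw [Matrix.add_mulVec, Matrix.smul_mulVec, Matrix.one_mulVec,
        dotProduct_add, dotProduct_smul]
      simp
    rw [hsplit]
    have h1 : 0 < dotProduct v v := by
      have := dotProduct_self_star_pos_iff (v := v)
      rw [hsv] at this
      exact this.2 hv
    have h2 : 0 ≤ dotProduct v (hessMat V x *ᵥ v) := by
      set w : E := (WithLp.equiv 2 (Fin d → ℝ)).symm v with hw
      have hrepr : (PiLp.basisFun 2 ℝ (Fin d)).repr w = v := by
        ext i
        simp [PiLp.basisFun_repr, hw]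
      have hmv : hessMat V x *ᵥ v = fun i => (fderiv ℝ (gradient V) x w) i := by
        rw [hessMat_eq_toMatrix, ← hrepr]
        exact LinearMap.toMatrix_mulVec_repr _ _ _ _
      have hinner : dotProduct v (hessMat V x *ᵥ v)
          = ⟪fderiv ℝ (gradient V) x w, w⟫ := by
        rw [hmv, PiLp.inner_apply, dotProduct]
        apply Finset.sum_congr rfl
        intro i _
        simp [hw, mul_comm]
      rw [hinner]
      exact hess_psd hV hconv x w
    positivity

end Main

/-- Rényi entropy estimate under the potential resolvent: if `V ∈ C²` is convex with `ΔV ≤ c`,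
`m > 1`, and `μ = ρ ℒ^d ∈ P₂(ℝ^d)` has finite Rényi entropy, then the pushforward
`J_# μ`, with density `ρ¹(x) = ρ(x + h∇V(x)) det(I + h D²V(x))`, satisfies
`F(J_# μ) ≤ e^{(m−1)ch} F(μ)`. -/
theorem stmt15 {d : ℕ} (V : EuclideanSpace ℝ (Fin d) → ℝ)
    (hV : ContDiff ℝ 2 V) (hconv : ConvexOn ℝ Set.univ V)
    (c : ℝ) (hc : 0 ≤ c) (hΔ : ∀ x, (hessMat V x).trace ≤ c)
    (m : ℝ) (hm : 1 < m) (h : ℝ) (hh : 0 < h)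
    (J : EuclideanSpace ℝ (Fin d) → EuclideanSpace ℝ (Fin d))
    (hJm : Measurable J)
    (hJ : ∀ x, J x + h • gradient V (J x) = x)
    (ρ : EuclideanSpace ℝ (Fin d) → ℝ) (hρm : Measurable ρ) (hρ0 : ∀ x, 0 ≤ ρ x)
    (μ : Measure (EuclideanSpace ℝ (Fin d)))
    (hμ : μ = volume.withDensity (fun x => ENNReal.ofReal (ρ x)))
    (hμp : IsProbabilityMeasure μ) (hμ2 : Integrable (fun x => ‖x‖ ^ 2) μ)
    (hF : Integrable (fun x => ρ x ^ m) volume) :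
    (1 / (m - 1)) * (∫ x, (ρ (x + h • gradient V x) * (1 + h • hessMat V x).det) ^ m)
      ≤ Real.exp ((m - 1) * c * h) * ((1 / (m - 1)) * ∫ x, ρ x ^ m) := by
  classical
  set B : EuclideanSpace ℝ (Fin d) → EuclideanSpace ℝ (Fin d) →L[ℝ] EuclideanSpace ℝ (Fin d) :=
    fun x => fderiv ℝ (gradient V) x with hB
  set A : EuclideanSpace ℝ (Fin d) → EuclideanSpace ℝ (Fin d) →L[ℝ] EuclideanSpace ℝ (Fin d) :=
    fun x => ContinuousLinearMap.id ℝ (EuclideanSpace ℝ (Fin d)) + h • B x with hA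
  set f : EuclideanSpace ℝ (Fin d) → EuclideanSpace ℝ (Fin d) :=
    fun x => x + h • gradient V x with hf
  set D : EuclideanSpace ℝ (Fin d) → ℝ := fun x => (1 + h • hessMat V x).det with hD
  -- determinant facts
  have hdetA : ∀ x, (A x).det = D x := by
    intro x
    have h0 : (A x).det = LinearMap.det ((A x : EuclideanSpace ℝ (Fin d) →L[ℝ]
        EuclideanSpace ℝ (Fin d)) : EuclideanSpace ℝ (Fin d) →ₗ[ℝ] EuclideanSpace ℝ (Fin d)) :=
      rfl
    rw [h0]
    simp only [hD, hA, hB]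
    rw [oneAdd_eq_toMatrix V h x, LinearMap.det_toMatrix]
  have hDpos : ∀ x, 0 < D x := fun x => (hessMat_posdef hV hconv hh x).det_pos
  have hDle : ∀ x, D x ≤ Real.exp (c * h) := by
    intro x
    have h1 := posDef_det_le_exp (hessMat_posdef hV hconv hh x)
    have htr : (1 + h • hessMat V x).trace = (d : ℝ) + h * (hessMat V x).trace := by
      rw [Matrix.trace_add, Matrix.trace_smul, Matrix.trace_one]
      simp [smul_eq_mul]
    refine h1.trans (Real.exp_le_exp.2 ?_)
    rw [htr]
    have := hΔ x
    nlinarith [hΔ x]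
  -- derivative of f
  have hfd : ∀ x, HasFDerivAt f (A x) x := by
    intro x
    have hg : HasFDerivAt (gradient V) (B x) x :=
      (((gradC1 hV).differentiable one_ne_zero) x).hasFDerivAt
    exact (hasFDerivAt_id x).add (hg.const_smul h)
  -- injectivity
  have hinj : Function.Injective f := by
    intro a b hab
    have h2 : a + h • gradient V a = b + h • gradient V b := hab
    have h1 : a - b = h • gradient V b - h • gradient V a := by
      rw [sub_eq_sub_iff_add_eq_add]
      linear_combination (norm := module) h2
    have h1' : a - b = h • (gradient V b - gradient V a) := by
      rw [h1, smul_sub]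
    have h3 : ⟪a - b, a - b⟫ = h * ⟪gradient V b - gradient V a, a - b⟫ := by
      nth_rewrite 1 [h1']
      rw [real_inner_smul_left]
    have h4 : 0 ≤ ⟪gradient V a - gradient V b, a - b⟫ := grad_monotone hV hconv b a
    have h5 : ⟪gradient V b - gradient V a, a - b⟫ = -⟪gradient V a - gradient V b, a - b⟫ := by
      rw [← inner_neg_left]
      congr 1
      abel
    have h6 : ⟪a - b, a - b⟫ ≤ 0 := by
      rw [h3, h5]
      nlinarith
    have := real_inner_self_nonpos.1 h6
    exact sub_eq_zero.1 this
  -- change of variables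
  have hfdw : ∀ x ∈ (Set.univ : Set (EuclideanSpace ℝ (Fin d))), HasFDerivWithinAt f (A x) Set.univ x :=
    fun x hx => (hfd x).hasFDerivWithinAt
  have hIOn : IntegrableOn (fun y => ρ y ^ m) (f '' Set.univ) volume := hF.integrableOn
  have hIright : Integrable (fun x => |(A x).det| • ρ (f x) ^ m) volume := by
    have := (integrableOn_image_iff_integrableOn_abs_det_fderiv_smul volume
      MeasurableSet.univ hfdw (hinj.injOn) (fun y => ρ y ^ m)).1 hIOn
    rwa [integrableOn_univ] at this
  have hCoV : ∫ x in f '' Set.univ, ρ x ^ m = ∫ x, |(A x).det| • ρ (f x) ^ m := by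
    rw [integral_image_eq_integral_abs_det_fderiv_smul volume
      MeasurableSet.univ hfdw (hinj.injOn) (fun y => ρ y ^ m)]
    exact setIntegral_univ
  have habs : ∀ x, |(A x).det| = D x := by
    intro x
    rw [hdetA x]
    exact abs_of_pos (hDpos x)
  -- pointwise bound
  have hpt : ∀ x, (ρ (f x) * D x) ^ m ≤ Real.exp ((m-1) * c * h) * (|(A x).det| • ρ (f x) ^ m) := by
    intro x
    rw [habs x, smul_eq_mul]
    have hr0 : 0 ≤ ρ (f x) := hρ0 _
    have hD0 : 0 < D x := hDpos x
    rw [Real.mul_rpow hr0 hD0.le]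
    have hDm : D x ^ m = D x ^ (m - 1) * D x := by
      have h1 := Real.rpow_add hD0 (m-1) 1
      rw [Real.rpow_one] at h1
      calc D x ^ m = D x ^ (m - 1 + 1) := by norm_num
        _ = D x ^ (m-1) * D x := h1
    rw [hDm]
    have hDle' : D x ^ (m - 1) ≤ Real.exp ((m-1) * c * h) := by
      have h1 : D x ^ (m - 1) ≤ (Real.exp (c * h)) ^ (m - 1) :=
        Real.rpow_le_rpow hD0.le (hDle x) (by linarith)
      refine h1.trans_eq ?_
      rw [← Real.exp_mul]
      congr 1
      ring
    calc ρ (f x) ^ m * (D x ^ (m - 1) * D x)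
        ≤ ρ (f x) ^ m * (Real.exp ((m-1) * c * h) * D x) := by
          apply mul_le_mul_of_nonneg_left _ (Real.rpow_nonneg hr0 m)
          exact mul_le_mul_of_nonneg_right hDle' hD0.le
      _ = Real.exp ((m-1) * c * h) * (D x * ρ (f x) ^ m) := by ring
  -- integral chain
  have hchain : (∫ x, (ρ (f x) * D x) ^ m) ≤ Real.exp ((m-1) * c * h) * ∫ x, ρ x ^ m := by
    have hstep1 : (∫ x, (ρ (f x) * D x) ^ m)
        ≤ ∫ x, Real.exp ((m-1) * c * h) * (|(A x).det| • ρ (f x) ^ m) := by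
      apply integral_mono_of_nonneg
      · filter_upwards with x
        exact Real.rpow_nonneg (mul_nonneg (hρ0 _) (hDpos x).le) m
      · exact hIright.const_mul _
      · filter_upwards with x
        exact hpt x
    have hstep2 : (∫ x, Real.exp ((m-1) * c * h) * (|(A x).det| • ρ (f x) ^ m))
        = Real.exp ((m-1) * c * h) * ∫ x, |(A x).det| • ρ (f x) ^ m :=
      integral_const_mul _ _
    have hstep3 : (∫ x, |(A x).det| • ρ (f x) ^ m) ≤ ∫ x, ρ x ^ m := by
      rw [← hCoV]
      apply setIntegral_le_integral hF
      filter_upwards with x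
      exact Real.rpow_nonneg (hρ0 x) m
    calc (∫ x, (ρ (f x) * D x) ^ m)
        ≤ Real.exp ((m-1) * c * h) * ∫ x, |(A x).det| • ρ (f x) ^ m := by
          rw [← hstep2]; exact hstep1
      _ ≤ Real.exp ((m-1) * c * h) * ∫ x, ρ x ^ m := by
          exact mul_le_mul_of_nonneg_left hstep3 (Real.exp_nonneg _)
  -- conclude
  have hm1 : (0:ℝ) ≤ 1 / (m - 1) := by
    have : (0:ℝ) < m - 1 := by linarith
    positivity
  calc (1 / (m - 1)) * (∫ x, (ρ (x + h • gradient V x) * (1 + h • hessMat V x).det) ^ m)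
      = (1 / (m - 1)) * (∫ x, (ρ (f x) * D x) ^ m) := rfl
    _ ≤ (1 / (m - 1)) * (Real.exp ((m-1) * c * h) * ∫ x, ρ x ^ m) :=
        mul_le_mul_of_nonneg_left hchain hm1
    _ = Real.exp ((m - 1) * c * h) * ((1 / (m - 1)) * ∫ x, ρ x ^ m) := by ring
end

section
/- Gauss–Green identity on ℝ^d without boundary term: Let V ∈ C²(ℝ^d) with 0 ≤ ΔV ≤ c, and ρ¹ ∈ W^{1,1}(ℝ^d) a probability density such that ⟨∇V, ∇ρ¹⟩ ∈ L¹(ℝ^d) and ρ¹|∇V| ∈ L¹(ℝ^d). Then ∫_{ℝ^d} ⟨∇V(x), ∇ρ¹(x)⟩ dx = −∫_{ℝ^d} ΔV(x) ρ¹(x) dx. -/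
open MeasureTheory

section GaussGreenAux
open Filter Metric

local notation "φ" => Real.smoothTransition

lemma st_deriv_zero {t : ℝ} (ht : t < 0 ∨ 1 < t) : deriv φ t = 0 := by
  have h : φ =ᶠ[nhds t] fun _ => (if t < 0 then (0:ℝ) else 1) := by
    rcases ht with ht | ht
    · filter_upwards [Iio_mem_nhds ht] with s hs
      simp [Real.smoothTransition.zero_of_nonpos hs.le, ht]
    · filter_upwards [Ioi_mem_nhds ht] with s hs
      simp [Real.smoothTransition.one_of_one_le hs.le, not_lt.mpr (zero_le_one.trans ht.le)]
  rw [h.deriv_eq, deriv_const]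

lemma st_deriv_bound : ∃ M : ℝ, 0 ≤ M ∧ ∀ t, |deriv φ t| ≤ M := by
  have hc : Continuous (deriv φ) :=
    (Real.smoothTransition.contDiff (n := 2)).continuous_deriv (by norm_num)
  have hsupp : HasCompactSupport (deriv φ) := by
    apply HasCompactSupport.intro (isCompact_Icc (a := (0:ℝ)) (b := 1))
    intro t ht
    simp only [Set.mem_Icc, not_and_or, not_le] at ht
    exact st_deriv_zero (by tauto)
  obtain ⟨C, hC⟩ := hc.bounded_above_of_compact_support hsupp
  exact ⟨max C 0, le_max_right _ _, fun t => (Real.norm_eq_abs _ ▸ hC t).trans (le_max_left _ _)⟩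

lemma cutoff_hasFDerivAt {d : ℕ} (R : ℝ) (x : EuclideanSpace ℝ (Fin d)) :
    HasFDerivAt (fun y => φ (2 - ‖y‖^2 / R^2))
      (deriv φ (2 - ‖x‖^2 / R^2) • ((-(R^2)⁻¹ * 2) • innerSL ℝ x)) x := by
  have h1 : HasFDerivAt (fun y : EuclideanSpace ℝ (Fin d) => ‖y‖^2) ((2:ℝ) • innerSL ℝ x) x := by
    have h := (hasStrictFDerivAt_norm_sq x).hasFDerivAt
    rwa [show (2:ℕ) • (innerSL ℝ x) = (2:ℝ) • innerSL ℝ x by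
      rw [← Nat.cast_smul_eq_nsmul ℝ 2 (innerSL ℝ x)]; norm_num] at h
  have ha : HasFDerivAt (fun y : EuclideanSpace ℝ (Fin d) => 2 - ‖y‖^2 / R^2)
      ((-(R^2)⁻¹ * 2) • innerSL ℝ x) x := by
    have h2 := (h1.mul_const ((R^2)⁻¹)).const_sub 2
    have : ∀ y : EuclideanSpace ℝ (Fin d), 2 - ‖y‖^2 * (R^2)⁻¹ = 2 - ‖y‖^2 / R^2 := by
      intro y; rw [div_eq_mul_inv]
    rw [funext this] at h2
    refine h2.congr_fderiv ?_
    ext v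
    simp [ContinuousLinearMap.smulRight_apply]
    ring
  have hφ : HasDerivAt φ (deriv φ (2 - ‖x‖^2 / R^2)) (2 - ‖x‖^2 / R^2) :=
    ((Real.smoothTransition.contDiff (n:=1)).differentiable (by norm_num) _).hasDerivAt
  exact hφ.comp_hasFDerivAt x ha

lemma exists_cutoff (d : ℕ) : ∃ (χ : ℕ → EuclideanSpace ℝ (Fin d) → ℝ) (K : ℝ),
    (∀ n, ContDiff ℝ 1 (χ n)) ∧ (∀ n, HasCompactSupport (χ n)) ∧
    (∀ n x, 0 ≤ χ n x ∧ χ n x ≤ 1) ∧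
    (∀ (n : ℕ) x, ‖x‖ ≤ (n + 1 : ℝ) → χ n x = 1) ∧
    (∀ n x, ‖fderiv ℝ (χ n) x‖ ≤ K) ∧
    (∀ x : EuclideanSpace ℝ (Fin d), ∀ᶠ n in atTop, fderiv ℝ (χ n) x = 0 ∧ χ n x = 1) := by
  obtain ⟨M, hM0, hM⟩ := st_deriv_bound
  set R : ℕ → ℝ := fun n => (n + 1 : ℝ) with hRdef
  have hR1 : ∀ n, (1:ℝ) ≤ R n := by intro n; simp only [hRdef]; linarith [Nat.cast_nonneg (α := ℝ) n]
  have hR0 : ∀ n, (0:ℝ) < R n := fun n => lt_of_lt_of_le one_pos (hR1 n)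
  refine ⟨fun n x => φ (2 - ‖x‖^2 / (R n)^2), 4 * M, ?_, ?_, ?_, ?_, ?_, ?_⟩
  · intro n
    exact (Real.smoothTransition.contDiff).comp
      (contDiff_const.sub ((contDiff_norm_sq ℝ).div_const _))
  · intro n
    apply HasCompactSupport.intro (isCompact_closedBall (0 : EuclideanSpace ℝ (Fin d)) (2 * R n))
    intro x hx
    simp only [mem_closedBall, dist_zero_right, not_le] at hx
    apply Real.smoothTransition.zero_of_nonpos
    have h1 : (2 * R n)^2 ≤ ‖x‖^2 := by nlinarith [hR0 n, norm_nonneg x]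
    have h2 : (0:ℝ) < (R n)^2 := by positivity
    rw [sub_nonpos, le_div_iff₀ h2]; nlinarith [hR0 n]
  · intro n x; exact ⟨Real.smoothTransition.nonneg _, Real.smoothTransition.le_one _⟩
  · intro n x hx
    apply Real.smoothTransition.one_of_one_le
    have h2 : (0:ℝ) < (R n)^2 := by positivity
    have ht : ‖x‖^2 / (R n)^2 ≤ 1 := by
      rw [div_le_one h2]
      have : ‖x‖ ≤ R n := hx
      nlinarith [norm_nonneg x, hR0 n]
    linarith
  · intro n x
    rw [(cutoff_hasFDerivAt (R n) x).fderiv]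
    rcases le_or_gt ‖x‖ (2 * R n) with hx | hx
    · rw [norm_smul, norm_smul, innerSL_apply_norm]
      have h2 : (0:ℝ) < (R n)^2 := by positivity
      have : ‖deriv φ (2 - ‖x‖ ^ 2 / R n ^ 2)‖ ≤ M := Real.norm_eq_abs _ ▸ hM _
      have hb : ‖-(R n ^ 2)⁻¹ * 2‖ * ‖x‖ ≤ 4 / R n := by
        rw [norm_mul, norm_neg, norm_inv]
        simp only [Real.norm_ofNat, Real.norm_eq_abs, abs_of_pos h2]
        rw [div_eq_mul_inv]
        have : (R n ^ 2)⁻¹ * 2 * ‖x‖ ≤ (R n ^ 2)⁻¹ * 2 * (2 * R n) := by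
          apply mul_le_mul_of_nonneg_left hx; positivity
        refine this.trans (le_of_eq ?_)
        field_simp
        ring
      calc ‖deriv φ (2 - ‖x‖ ^ 2 / R n ^ 2)‖ * (‖-(R n ^ 2)⁻¹ * 2‖ * ‖x‖)
          ≤ M * (4 / R n) := by
            apply mul_le_mul this hb (by positivity) hM0
        _ ≤ 4 * M := by
            rw [mul_div_assoc']
            rw [div_le_iff₀ (hR0 n)]
            nlinarith [hR1 n, hM0]
    · have : deriv φ (2 - ‖x‖^2 / (R n)^2) = 0 := by
        apply st_deriv_zero
        left
        have h2 : (0:ℝ) < (R n)^2 := by positivity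
        rw [sub_neg, lt_div_iff₀ h2]
        nlinarith [hR0 n]
      rw [this, zero_smul, norm_zero]
      positivity
  · intro x
    filter_upwards [eventually_ge_atTop ⌈‖x‖⌉₊] with n hn
    have hxn : ‖x‖ < R n := by
      calc ‖x‖ ≤ (⌈‖x‖⌉₊ : ℝ) := Nat.le_ceil _
        _ ≤ (n : ℝ) := by exact_mod_cast hn
        _ < R n := by simp [hRdef]
    have hev : (fun y : EuclideanSpace ℝ (Fin d) => φ (2 - ‖y‖^2 / (R n)^2)) =ᶠ[nhds x]
        fun _ => (1:ℝ) := by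
      have hopen : IsOpen {y : EuclideanSpace ℝ (Fin d) | ‖y‖ < R n} :=
        isOpen_lt continuous_norm continuous_const
      filter_upwards [hopen.mem_nhds hxn] with y hy
      apply Real.smoothTransition.one_of_one_le
      have h2 : (0:ℝ) < (R n)^2 := by positivity
      have ht : ‖y‖^2 / (R n)^2 ≤ 1 := by
        rw [div_le_one h2]
        nlinarith [norm_nonneg y, le_of_lt hy, hR0 n]
      linarith
    constructor
    · rw [hev.fderiv_eq, fderiv_fun_const]; rfl
    · have := hev.self_of_nhds
      simpa using this

lemma integral_fderiv_compsupp {d : ℕ} (h : EuclideanSpace ℝ (Fin d) → ℝ)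
    (hh : ContDiff ℝ 1 h) (hs : HasCompactSupport h) (v : EuclideanSpace ℝ (Fin d)) :
    ∫ x, fderiv ℝ h x v = 0 := by
  obtain ⟨χ, K, hχC, hχS, hχ01, hχone, hχK, hχev⟩ := exists_cutoff d
  obtain ⟨r, hr⟩ := hs.isCompact.isBounded.subset_closedBall 0
  obtain ⟨n, hn⟩ := exists_nat_ge r
  -- χ n = 1 on the open ball of radius n+1, which contains tsupport h
  have hball : tsupport h ⊆ {y : EuclideanSpace ℝ (Fin d) | ‖y‖ < (n:ℝ) + 1} := by
    intro y hy
    have := hr hy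
    simp only [mem_closedBall, dist_zero_right] at this
    have : ‖y‖ ≤ (n:ℝ) := this.trans hn
    simpa using this.trans_lt (by linarith)
  have hopen : IsOpen {y : EuclideanSpace ℝ (Fin d) | ‖y‖ < (n:ℝ) + 1} :=
    isOpen_lt continuous_norm continuous_const
  have hone : ∀ y ∈ {y : EuclideanSpace ℝ (Fin d) | ‖y‖ < (n:ℝ) + 1}, χ n y = 1 := fun y hy =>
    hχone n y (le_of_lt hy)
  have hχd : Differentiable ℝ (χ n) := (hχC n).differentiable (by norm_num)
  have hhd : Differentiable ℝ h := hh.differentiable (by norm_num)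
  have hχcont : Continuous (χ n) := (hχC n).continuous
  have hfdχ : Continuous fun x => fderiv ℝ (χ n) x v :=
    ((hχC n).continuous_fderiv (by norm_num)).clm_apply continuous_const
  have hfdh : Continuous fun x => fderiv ℝ h x v :=
    (hh.continuous_fderiv (by norm_num)).clm_apply continuous_const
  -- integrability
  have i3 : Integrable (fun x => h x * χ n x) volume :=
    (hh.continuous.mul hχcont).integrable_of_hasCompactSupport (hs.mul_right)
  have i1 : Integrable (fun x => h x * fderiv ℝ (χ n) x v) volume :=
    (hh.continuous.mul hfdχ).integrable_of_hasCompactSupport (hs.mul_right)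
  have hsd : HasCompactSupport fun x => fderiv ℝ h x v * χ n x := by
    apply HasCompactSupport.intro hs.isCompact
    intro x hx
    have : fderiv ℝ h x = 0 := by
      by_contra hne
      exact hx (support_fderiv_subset ℝ (Function.mem_support.mpr hne))
    simp [this]
  have i2 : Integrable (fun x => fderiv ℝ h x v * χ n x) volume :=
    (hfdh.mul hχcont).integrable_of_hasCompactSupport hsd
  have key := integral_mul_fderiv_eq_neg_fderiv_mul_of_integrable i2 i1 i3 (fun x _ => hhd x) (fun x _ => hχd x)
    (v := v) (μ := volume)
  -- LHS is 0
  have hLHS : ∀ x, h x * fderiv ℝ (χ n) x v = 0 := by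
    intro x
    rcases eq_or_ne (h x) 0 with hx | hx
    · simp [hx]
    · have hmem : x ∈ {y : EuclideanSpace ℝ (Fin d) | ‖y‖ < (n:ℝ) + 1} :=
        hball (subset_tsupport h (Function.mem_support.mpr hx))
      have : χ n =ᶠ[nhds x] fun _ => (1:ℝ) := by
        filter_upwards [hopen.mem_nhds hmem] with y hy using hone y hy
      rw [this.fderiv_eq, fderiv_fun_const]
      simp
  have hRHS : ∀ x, fderiv ℝ h x v * χ n x = fderiv ℝ h x v := by
    intro x
    rcases eq_or_ne (fderiv ℝ h x) 0 with hx | hx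
    · simp [hx]
    · rw [hone x (hball (support_fderiv_subset ℝ (Function.mem_support.mpr hx))), mul_one]
  rw [funext hLHS] at key
  simp only [integral_zero] at key
  have := key.symm
  rw [neg_eq_zero] at this
  rw [← funext hRHS]
  exact this

lemma integral_div_compsupp {d : ℕ} (G : EuclideanSpace ℝ (Fin d) → EuclideanSpace ℝ (Fin d))
    (hG : ContDiff ℝ 1 G) (hs : HasCompactSupport G) :
    ∫ x, (∑ j, fderiv ℝ G x (EuclideanSpace.single j 1) j) = 0 := by
  have hGd : Differentiable ℝ G := hG.differentiable (by norm_num)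
  have hterm : ∀ (j : Fin d) x, fderiv ℝ G x (EuclideanSpace.single j 1) j
      = fderiv ℝ (fun y => G y j) x (EuclideanSpace.single j 1) := by
    intro j x
    have hcomp : (fun y => G y j) = (⇑(EuclideanSpace.proj (𝕜 := ℝ) j)) ∘ G := by
      funext y; simp
    rw [hcomp, ((EuclideanSpace.proj (𝕜 := ℝ) j).hasFDerivAt.comp x (hGd x).hasFDerivAt).fderiv]
    simp
  have hj : ∀ j : Fin d, ContDiff ℝ 1 (fun y => G y j) := by
    intro j
    have : (fun y => G y j) = (⇑(EuclideanSpace.proj (𝕜 := ℝ) j)) ∘ G := by funext y; simp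
    rw [this]
    exact (EuclideanSpace.proj (𝕜 := ℝ) j).contDiff.comp hG
  have hjs : ∀ j : Fin d, HasCompactSupport (fun y => G y j) := by
    intro j
    have : (fun y => G y j) = (⇑(EuclideanSpace.proj (𝕜 := ℝ) j)) ∘ G := by funext y; simp
    rw [this]
    exact hs.comp_left (map_zero _)
  have hint : ∀ j : Fin d, Integrable (fun x => fderiv ℝ G x (EuclideanSpace.single j 1) j)
      volume := by
    intro j
    have hc : Continuous fun x => fderiv ℝ G x (EuclideanSpace.single j 1) j := by
      have h1 : Continuous fun x => fderiv ℝ G x (EuclideanSpace.single j 1) :=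
        (hG.continuous_fderiv (by norm_num)).clm_apply continuous_const
      exact (EuclideanSpace.proj (𝕜 := ℝ) j).continuous.comp h1
    apply hc.integrable_of_hasCompactSupport
    apply HasCompactSupport.intro hs.isCompact
    intro x hx
    have : fderiv ℝ G x = 0 := by
      by_contra hne
      exact hx (support_fderiv_subset ℝ (Function.mem_support.mpr hne))
    simp [this]
  rw [integral_finset_sum Finset.univ (fun j _ => hint j)]
  apply Finset.sum_eq_zero
  intro j _
  calc ∫ x, fderiv ℝ G x (EuclideanSpace.single j 1) j
      = ∫ x, fderiv ℝ (fun y => G y j) x (EuclideanSpace.single j 1) := by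
        congr 1; funext x; exact hterm j x
    _ = 0 := integral_fderiv_compsupp _ (hj j) (hjs j) _

end GaussGreenAux

section GaussGreenAux2
open Filter Metric

section helpers
variable {d : ℕ}

lemma grad_contDiff {f : EuclideanSpace ℝ (Fin d) → ℝ} (hf : ContDiff ℝ 2 f) :
    ContDiff ℝ 1 (gradient f) := by
  have : gradient f = fun x =>
      (InnerProductSpace.toDual ℝ (EuclideanSpace ℝ (Fin d))).symm (fderiv ℝ f x) := rfl
  rw [this]
  exact ((InnerProductSpace.toDual ℝ
    (EuclideanSpace ℝ (Fin d))).symm.toLinearIsometry.contDiff).comp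
    (hf.fderiv_right (m := 1) (by norm_num))

lemma grad_inner {f : EuclideanSpace ℝ (Fin d) → ℝ} (x w : EuclideanSpace ℝ (Fin d)) :
    (inner ℝ (gradient f x) w : ℝ) = fderiv ℝ f x w :=
  InnerProductSpace.toDual_symm_apply

lemma single_decomp (v : EuclideanSpace ℝ (Fin d)) :
    ∑ j, v j • EuclideanSpace.single j (1:ℝ) = v := by
  ext k
  have h : (∑ j, v j • EuclideanSpace.single j (1:ℝ)) k
      = ∑ j, (v j • EuclideanSpace.single j (1:ℝ)) k :=
    (congrFun (WithLp.ofLp_sum (p := 2) (s := Finset.univ) (f := _)) k).trans (Finset.sum_apply k Finset.univ _)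
  rw [h]
  simp [EuclideanSpace.single_apply, Finset.sum_ite_eq']

lemma inner_coord (u : EuclideanSpace ℝ (Fin d)) (j : Fin d) :
    (inner ℝ u (EuclideanSpace.single j (1:ℝ)) : ℝ) = u j := by
  simp [PiLp.inner_apply, EuclideanSpace.single_apply, Finset.sum_ite_eq']

lemma inner_sum_eq (u v : EuclideanSpace ℝ (Fin d)) :
    (inner ℝ u v : ℝ) = ∑ j, u j * v j := by
  simp [PiLp.inner_apply]
  exact Finset.sum_congr rfl fun _ _ => mul_comm _ _

end helpers


/-- Gauss–Green identity on `ℝ^d` without boundary term: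
`∫ ⟨∇V, ∇ρ¹⟩ dx = − ∫ ΔV ρ¹ dx`. -/
theorem stmt17 {d : ℕ} (V : EuclideanSpace ℝ (Fin d) → ℝ)
    (hV : ContDiff ℝ 2 V) (c : ℝ) (hc : 0 ≤ c)
    (hΔ0 : ∀ x, 0 ≤ (hessMat V x).trace) (hΔc : ∀ x, (hessMat V x).trace ≤ c)
    (ρ1 : EuclideanSpace ℝ (Fin d) → ℝ) (hρ1 : ContDiff ℝ 1 ρ1) (hρ1nn : ∀ x, 0 ≤ ρ1 x)
    (hρ1int : Integrable ρ1 volume) (hρ1prob : (∫ x, ρ1 x) = 1)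
    (hgradint : Integrable (fun x => ‖gradient ρ1 x‖) volume)
    (h1 : Integrable (fun x => (inner ℝ (gradient V x) (gradient ρ1 x) : ℝ)) volume)
    (h2 : Integrable (fun x => ρ1 x * ‖gradient V x‖) volume) :
    (∫ x, (inner ℝ (gradient V x) (gradient ρ1 x) : ℝ))
      = - ∫ x, (hessMat V x).trace * ρ1 x := by
  classical
  set gV := gradient V with hgVdef
  set gρ := gradient ρ1 with hgρdef
  have hgV : ContDiff ℝ 1 gV := grad_contDiff hV
  have hgVd : Differentiable ℝ gV := hgV.differentiable (by norm_num)
  have hVd : Differentiable ℝ V := hV.differentiable (by norm_num)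
  have hρd : Differentiable ℝ ρ1 := hρ1.differentiable (by norm_num)
  have hgVcont : Continuous gV := hgV.continuous
  have hgρcont : Continuous gρ := by
    have : gρ = fun x =>
        (InnerProductSpace.toDual ℝ (EuclideanSpace ℝ (Fin d))).symm (fderiv ℝ ρ1 x) := rfl
    rw [this]
    exact (LinearIsometryEquiv.continuous _).comp (hρ1.continuous_fderiv (by norm_num))
  -- trace as a sum
  have htr : ∀ x, (hessMat V x).trace = ∑ j, fderiv ℝ gV x (EuclideanSpace.single j 1) j := by
    intro x
    simp [hessMat, Matrix.trace, Matrix.diag]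
    rfl
  have htrcont : Continuous fun x => (hessMat V x).trace := by
    rw [show (fun x => (hessMat V x).trace)
        = fun x => ∑ j, fderiv ℝ gV x (EuclideanSpace.single j 1) j from funext htr]
    apply continuous_finset_sum
    intro j _
    exact (EuclideanSpace.proj (𝕜 := ℝ) j).continuous.comp
      ((hgV.continuous_fderiv (by norm_num)).clm_apply continuous_const)
  obtain ⟨χ, K, hχC, hχS, hχ01, hχone, hχK, hχev⟩ := exists_cutoff d
  have hK0 : 0 ≤ K := le_trans (norm_nonneg _) (hχK 0 0)
  -- the three integrands
  set A : ℕ → EuclideanSpace ℝ (Fin d) → ℝ := fun n x => χ n x * (inner ℝ (gV x) (gρ x) : ℝ) with hA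
  set B : ℕ → EuclideanSpace ℝ (Fin d) → ℝ := fun n x => ρ1 x * fderiv ℝ (χ n) x (gV x) with hB
  set C : ℕ → EuclideanSpace ℝ (Fin d) → ℝ := fun n x => (χ n x * ρ1 x) * (hessMat V x).trace with hC
  -- divergence identity
  have hdiv : ∀ n x, (∑ j, fderiv ℝ (fun y => (χ n y * ρ1 y) • gV y) x
      (EuclideanSpace.single j 1) j) = A n x + B n x + C n x := by
    intro n x
    have hχdx := (((hχC n).differentiable (by norm_num)) x).hasFDerivAt
    have hρdx := (hρd x).hasFDerivAt
    have hcd := hχdx.mul hρdx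
    have hF := hcd.smul (hgVd x).hasFDerivAt
    have hsum : ∀ j : Fin d, fderiv ℝ (fun y => (χ n y * ρ1 y) • gV y) x
        (EuclideanSpace.single j 1) j
        = (χ n x * ρ1 x) * fderiv ℝ gV x (EuclideanSpace.single j 1) j
          + (χ n x * fderiv ℝ ρ1 x (EuclideanSpace.single j 1)
             + ρ1 x * fderiv ℝ (χ n) x (EuclideanSpace.single j 1)) * gV x j := by
      intro j
      rw [show (fun y => (χ n y * ρ1 y) • gV y) = (χ n * ρ1) • gV from rfl, hF.fderiv]
      simp only [ContinuousLinearMap.add_apply, ContinuousLinearMap.coe_smul',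
        Pi.smul_apply, ContinuousLinearMap.smulRight_apply, PiLp.add_apply,
        PiLp.smul_apply, smul_eq_mul, Pi.mul_apply]
      try ring
    rw [Finset.sum_congr rfl (fun j _ => hsum j), Finset.sum_add_distrib]
    have e1 : ∑ j, (χ n x * ρ1 x) * fderiv ℝ gV x (EuclideanSpace.single j 1) j
        = C n x := by
      simp only [hC]
      rw [htr x]
      exact (Finset.mul_sum _ _ _).symm
    have hgρc : ∀ j : Fin d, fderiv ℝ ρ1 x (EuclideanSpace.single j 1) = gρ x j := by
      intro j
      rw [← grad_inner x (EuclideanSpace.single j 1)]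
      exact inner_coord (gρ x) j
    have hfχ : ∑ j, fderiv ℝ (χ n) x (EuclideanSpace.single j 1) * gV x j
        = fderiv ℝ (χ n) x (gV x) := by
      conv_rhs => rw [← single_decomp (gV x)]
      rw [map_sum]
      apply Finset.sum_congr rfl
      intro j _
      rw [_root_.map_smul]
      simp only [smul_eq_mul]
      ring
    have e2 : ∑ j, (χ n x * fderiv ℝ ρ1 x (EuclideanSpace.single j 1)
        + ρ1 x * fderiv ℝ (χ n) x (EuclideanSpace.single j 1)) * gV x j
        = A n x + B n x := by
      have expand : ∀ j : Fin d, (χ n x * fderiv ℝ ρ1 x (EuclideanSpace.single j 1)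
          + ρ1 x * fderiv ℝ (χ n) x (EuclideanSpace.single j 1)) * gV x j
          = χ n x * (gρ x j * gV x j)
            + ρ1 x * (fderiv ℝ (χ n) x (EuclideanSpace.single j 1) * gV x j) := by
        intro j
        rw [hgρc j]
        ring
      rw [Finset.sum_congr rfl (fun j _ => expand j), Finset.sum_add_distrib,
        ← Finset.mul_sum, ← Finset.mul_sum, hfχ]
      have : ∑ j, gρ x j * gV x j = (inner ℝ (gV x) (gρ x) : ℝ) := by
        rw [inner_sum_eq]
        exact Finset.sum_congr rfl fun j _ => mul_comm _ _
      rw [this]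
      try simp only [hA, hB]
    rw [e1, e2]
    ring
  -- integrabilities
  have hiA : ∀ n, Integrable (A n) volume := by
    intro n
    exact h1.bdd_mul ((hχC n).continuous.aestronglyMeasurable)
      (c := 1) (ae_of_all _ fun x => by
        rw [Real.norm_eq_abs, abs_of_nonneg (hχ01 n x).1]; exact (hχ01 n x).2)
  have hiB : ∀ n, Integrable (B n) volume := by
    intro n
    apply (h2.const_mul K).mono'
    · exact (hρ1.continuous.mul
        (((hχC n).continuous_fderiv (by norm_num)).clm_apply hgVcont)).aestronglyMeasurable
    · filter_upwards with x
      rw [hB]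
      simp only [Real.norm_eq_abs, abs_mul, abs_of_nonneg (hρ1nn x)]
      calc ρ1 x * |fderiv ℝ (χ n) x (gV x)|
          ≤ ρ1 x * (K * ‖gV x‖) := by
            apply mul_le_mul_of_nonneg_left _ (hρ1nn x)
            calc |fderiv ℝ (χ n) x (gV x)| ≤ ‖fderiv ℝ (χ n) x‖ * ‖gV x‖ :=
              (fderiv ℝ (χ n) x).le_opNorm (gV x)
            _ ≤ K * ‖gV x‖ := mul_le_mul_of_nonneg_right (hχK n x) (norm_nonneg _)
        _ = K * (ρ1 x * ‖gV x‖) := by ring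
  have hiC : ∀ n, Integrable (C n) volume := by
    intro n
    apply (hρ1int.const_mul c).mono'
    · exact (((hχC n).continuous.mul hρ1.continuous).mul htrcont).aestronglyMeasurable
    · filter_upwards with x
      rw [hC]
      have h0 : 0 ≤ χ n x * ρ1 x * (hessMat V x).trace :=
        mul_nonneg (mul_nonneg (hχ01 n x).1 (hρ1nn x)) (hΔ0 x)
      rw [Real.norm_eq_abs, abs_of_nonneg h0]
      calc χ n x * ρ1 x * (hessMat V x).trace ≤ 1 * ρ1 x * c := by
            apply mul_le_mul
            · exact mul_le_mul_of_nonneg_right (hχ01 n x).2 (hρ1nn x)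
            · exact hΔc x
            · exact hΔ0 x
            · simpa using hρ1nn x
        _ = c * ρ1 x := by ring
  -- per-n identity
  have hzero : ∀ n, (∫ x, A n x) + (∫ x, B n x) + (∫ x, C n x) = 0 := by
    intro n
    have hFc : ContDiff ℝ 1 (fun y => (χ n y * ρ1 y) • gV y) := ((hχC n).mul hρ1).smul hgV
    have hFs : HasCompactSupport (fun y => (χ n y * ρ1 y) • gV y) := by
      apply HasCompactSupport.intro (hχS n).isCompact
      intro x hx
      rw [image_eq_zero_of_notMem_tsupport hx]
      simp
    have h0 := integral_div_compsupp _ hFc hFs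
    rw [show (fun x => ∑ j, fderiv ℝ (fun y => (χ n y * ρ1 y) • gV y) x
        (EuclideanSpace.single j 1) j) = fun x => A n x + B n x + C n x from
        funext fun x => hdiv n x] at h0
    have hAB : Integrable (fun x => A n x + B n x) volume := (hiA n).add (hiB n)
    rw [integral_add hAB (hiC n), integral_add (hiA n) (hiB n)] at h0
    exact h0
  -- limits
  have hlimA : Tendsto (fun n => ∫ x, A n x) atTop
      (nhds (∫ x, (inner ℝ (gV x) (gρ x) : ℝ))) := by
    apply tendsto_integral_of_dominated_convergence (fun x => ‖(inner ℝ (gV x) (gρ x) : ℝ)‖)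
      (fun n => (hiA n).aestronglyMeasurable) h1.norm
    · intro n
      filter_upwards with x
      rw [hA]
      simp only [Real.norm_eq_abs, abs_mul]
      calc |χ n x| * |(inner ℝ (gV x) (gρ x) : ℝ)| ≤ 1 * |(inner ℝ (gV x) (gρ x) : ℝ)| := by
            apply mul_le_mul_of_nonneg_right _ (abs_nonneg _)
            rw [abs_of_nonneg (hχ01 n x).1]; exact (hχ01 n x).2
        _ = |(inner ℝ (gV x) (gρ x) : ℝ)| := one_mul _
    · filter_upwards with x
      apply Tendsto.congr' _ tendsto_const_nhds
      filter_upwards [hχev x] with n hn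
      rw [hA]
      simp [hn.2]
  have hlimB : Tendsto (fun n => ∫ x, B n x) atTop (nhds 0) := by
    have h0 : (0:ℝ) = ∫ (_ : EuclideanSpace ℝ (Fin d)), (0:ℝ) := by simp
    rw [h0]
    apply tendsto_integral_of_dominated_convergence (fun x => K * (ρ1 x * ‖gV x‖))
      (fun n => (hiB n).aestronglyMeasurable) (h2.const_mul K)
    · intro n
      filter_upwards with x
      rw [hB]
      simp only [Real.norm_eq_abs, abs_mul, abs_of_nonneg (hρ1nn x)]
      calc ρ1 x * |fderiv ℝ (χ n) x (gV x)|
          ≤ ρ1 x * (K * ‖gV x‖) := by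
            apply mul_le_mul_of_nonneg_left _ (hρ1nn x)
            calc |fderiv ℝ (χ n) x (gV x)| ≤ ‖fderiv ℝ (χ n) x‖ * ‖gV x‖ :=
              (fderiv ℝ (χ n) x).le_opNorm (gV x)
            _ ≤ K * ‖gV x‖ := mul_le_mul_of_nonneg_right (hχK n x) (norm_nonneg _)
        _ = K * (ρ1 x * ‖gV x‖) := by ring
    · filter_upwards with x
      apply Tendsto.congr' _ tendsto_const_nhds
      filter_upwards [hχev x] with n hn
      simp [hB, hn.1]
  have hlimC : Tendsto (fun n => ∫ x, C n x) atTop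
      (nhds (∫ x, (hessMat V x).trace * ρ1 x)) := by
    apply tendsto_integral_of_dominated_convergence (fun x => c * ρ1 x)
      (fun n => (hiC n).aestronglyMeasurable) (hρ1int.const_mul c)
    · intro n
      filter_upwards with x
      rw [hC]
      have h0 : 0 ≤ χ n x * ρ1 x * (hessMat V x).trace :=
        mul_nonneg (mul_nonneg (hχ01 n x).1 (hρ1nn x)) (hΔ0 x)
      rw [Real.norm_eq_abs, abs_of_nonneg h0]
      calc χ n x * ρ1 x * (hessMat V x).trace ≤ 1 * ρ1 x * c := by
            apply mul_le_mul
            · exact mul_le_mul_of_nonneg_right (hχ01 n x).2 (hρ1nn x)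
            · exact hΔc x
            · exact hΔ0 x
            · simpa using hρ1nn x
        _ = c * ρ1 x := by ring
    · filter_upwards with x
      apply Tendsto.congr' _ tendsto_const_nhds
      filter_upwards [hχev x] with n hn
      simp only [hC, hn.2]
      ring
  have hsum : Tendsto (fun n => (∫ x, A n x) + (∫ x, B n x) + (∫ x, C n x)) atTop
      (nhds ((∫ x, (inner ℝ (gV x) (gρ x) : ℝ)) + 0 + ∫ x, (hessMat V x).trace * ρ1 x)) :=
    (hlimA.add hlimB).add hlimC
  have hfinal := tendsto_nhds_unique
    (Tendsto.congr (fun n => (hzero n).symm) tendsto_const_nhds) hsum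
  linarith [hfinal]

end GaussGreenAux2
end
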